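/- arXiv:1205.4464 — 5 statements merged into one kernel-verified Lean document; each statement's English description precedes it below -/
import Mathlib

section
/- With the setup of the previous statement, the map A ↦ (A·T_p)_p is a bijection from the set of open subgroups A of Ĝ with π(A) = K onto the set of tuples (A_p)_p with A_p open in Ĝ, π(A_p) = K, [π⁻¹(K):A_p] a power of p, and A_p = π⁻¹(K) for all but finitely many p; moreover [π⁻¹(K):A] = ∏_p [π⁻¹(K):A·T_p]. -/
/-!
Write `T_p` for the elements of `N̂` whose `p`-component is trivial. The key fact is that an
open subgroup `A` contains the `p`-component of each of its elements in `N̂`: in a finite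
quotient `G ⧸ C` with `C ≤ A` open normal, the `p`-component and the complementary factor
commute and have coprime orders, so the former is a power of their product. Conversely, an
element of `N̂` with all components in `A` lies in `A`, since `A` contains all but finitely many
factors `N_q`. Together these give `A = ⋂_p A·T_p`, which is injectivity. A tuple `(A_p)` with
`p`-power indices contains every `N_q`, `q ≠ p`, hence `T_p`, and gluing components shows
`(⋂_q A_q)·T_p = A_p`. The index formula holds because the `A·T_p` have pairwise coprime indices
in `π⁻¹(K)` and intersect to `A`.
-/

open Filter Topology

namespace Subgroup

variable {G : Type*} [Group G]

/-- Orbit–stabilizer on `G ⧸ H`: since `K` is normal, `H ⊔ K` and `K` have the same orbit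
through the base coset. -/
theorem relIndex_sup_right_of_normal (H K : Subgroup G) [K.Normal] :
    H.relIndex (H ⊔ K) = H.relIndex K := by
  have hstab : ∀ L : Subgroup G,
      MulAction.stabilizer L ((1 : G) : G ⧸ H) = H.subgroupOf L := fun L => by
    ext x
    rw [MulAction.mem_stabilizer_iff, mem_subgroupOf]
    change (((x : G) * 1 : G) : G ⧸ H) = ((1 : G) : G ⧸ H) ↔ _
    rw [QuotientGroup.eq, mul_one, mul_one, inv_mem_iff]
  have horbit : MulAction.orbit (H ⊔ K : Subgroup G) ((1 : G) : G ⧸ H) =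
      MulAction.orbit K ((1 : G) : G ⧸ H) := by
    ext y
    constructor
    · rintro ⟨⟨_, hg⟩, rfl⟩
      obtain ⟨h, hh, k, hk, rfl⟩ := mem_sup_of_normal_right.mp hg
      refine ⟨⟨h * k * h⁻¹, Normal.conj_mem inferInstance k hk h⟩, ?_⟩
      change ((h * k * h⁻¹ * 1 : G) : G ⧸ H) = ((h * k * 1 : G) : G ⧸ H)
      rw [QuotientGroup.eq]
      convert hh using 1
      group
    · rintro ⟨⟨k, hk⟩, rfl⟩
      exact ⟨⟨k, mem_sup_right hk⟩, rfl⟩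
  rw [relIndex, relIndex, ← hstab, ← hstab, MulAction.index_stabilizer,
    MulAction.index_stabilizer, horbit]

theorem le_of_coprime_relIndex {H K L : Subgroup G} [K.Normal] (hHL : H ≤ L) (hKL : K ≤ L)
    (h : (H.relIndex K).Coprime (H.relIndex L)) : K ≤ H := by
  rw [← relIndex_sup_right_of_normal] at h
  rw [← relIndex_eq_one, ← relIndex_sup_right_of_normal]
  exact h.eq_one_of_dvd
    ⟨_, (relIndex_mul_relIndex H (H ⊔ K) L le_sup_left (sup_le hHL hKL)).symm⟩

theorem pow_mem_of_relIndex_dvd (H : Subgroup G) [H.Normal] {K : Subgroup G} {x : G}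
    (hx : x ∈ K) {d : ℕ} (hd : H.relIndex K ∣ d) : x ^ d ∈ H := by
  obtain ⟨c, rfl⟩ := hd
  rw [pow_mul]
  exact pow_mem (H.pow_relIndex_mem hx) c

theorem mem_of_commute_of_coprime {A C : Subgroup G} [C.Normal] (hCA : C ≤ A) {u t : G}
    (hut : Commute u t) (hmem : u * t ∈ A) {a b : ℕ} (hab : a.Coprime b)
    (hu : u ^ a ∈ C) (ht : t ^ b ∈ C) : u ∈ A := by
  obtain ⟨x, y, hxy⟩ := Nat.isCoprime_iff_coprime.mpr hab
  have key : u = (u ^ a) ^ x * (u * t) ^ (y * b) * ((t ^ b) ^ y)⁻¹ := by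
    conv_lhs => rw [← zpow_one u, ← hxy]
    rw [hut.mul_zpow]
    group
  rw [key]
  exact mul_mem (mul_mem (hCA (zpow_mem hu x)) (zpow_mem hmem _)) (inv_mem (hCA (zpow_mem ht y)))

theorem relIndex_inf_eq_mul_of_coprime {H K L : Subgroup G}
    (h : (H.relIndex L).Coprime (K.relIndex L)) (hH : H.relIndex L ≠ 0)
    (hK : K.relIndex L ≠ 0) :
    (H ⊓ K).relIndex L = H.relIndex L * K.relIndex L :=
  le_antisymm relIndex_inf_le <| Nat.le_of_dvd (Nat.pos_of_ne_zero (relIndex_inf_ne_zero hH hK)) <|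
    h.mul_dvd_of_dvd_of_dvd (relIndex_dvd_of_le_left L inf_le_left)
      (relIndex_dvd_of_le_left L inf_le_right)

theorem relIndex_biInf_eq_prod {H : Subgroup G} {B : Nat.Primes → Subgroup G}
    (hpow : ∀ p, ∃ k, (B p).relIndex H = (p : ℕ) ^ k) (S : Finset Nat.Primes) :
    (⨅ p ∈ S, B p).relIndex H = ∏ p ∈ S, (B p).relIndex H := by
  induction S using Finset.induction_on with
  | empty => simp
  | @insert a S haS ih =>
    have hne : ∀ p, (B p).relIndex H ≠ 0 := fun p => by
      obtain ⟨k, hk⟩ := hpow p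
      exact hk ▸ pow_ne_zero k p.2.ne_zero
    rw [Finset.iInf_insert, Finset.prod_insert haS, relIndex_inf_eq_mul_of_coprime, ih]
    · rw [ih]
      refine Nat.Coprime.prod_right fun p hp => ?_
      obtain ⟨k, hk⟩ := hpow a
      obtain ⟨j, hj⟩ := hpow p
      rw [hk, hj]
      exact Nat.Coprime.pow _ _ <| (Nat.coprime_primes a.2 p.2).mpr fun h =>
        haS (Subtype.ext h ▸ hp)
    · exact hne a
    · rw [ih]
      exact Finset.prod_ne_zero_iff.mpr fun p _ => hne p

theorem relIndex_iInf_eq_finprod {H : Subgroup G} {B : Nat.Primes → Subgroup G}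
    (hpow : ∀ p, ∃ k, (B p).relIndex H = (p : ℕ) ^ k) (hfin : ∀ᶠ p in cofinite, B p = H) :
    (⨅ p, B p).relIndex H = ∏ᶠ p, (B p).relIndex H := by
  set S := (eventually_cofinite.mp hfin).toFinset
  have hS : ∀ p ∉ S, B p = H := fun p hp => by simpa [S] using hp
  have hinf : (⨅ p, B p) ⊓ H = (⨅ p ∈ S, B p) ⊓ H :=
    le_antisymm (inf_le_inf_right _ (le_iInf₂ fun p _ => iInf_le B p)) <|
      le_inf (le_iInf fun p => by
        by_cases hp : p ∈ S
        · exact inf_le_left.trans (biInf_le B hp)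
        · exact inf_le_right.trans (hS p hp).ge) inf_le_right
  rw [← inf_relIndex_right, hinf, inf_relIndex_right, relIndex_biInf_eq_prod hpow,
    finprod_eq_prod_of_mulSupport_subset]
  intro p hp
  by_contra hpS
  exact hp (by simp only [hS p hpS, relIndex_self])

theorem sup_eq_comap_of_map_eq {N A : Subgroup G} [N.Normal] {K : Subgroup (G ⧸ N)}
    (h : A.map (QuotientGroup.mk' N) = K) : A ⊔ N = K.comap (QuotientGroup.mk' N) := by
  rw [← h, comap_map_eq, QuotientGroup.ker_mk']

theorem isOpen_iInf_of_eventually_eq [TopologicalSpace G] [SeparatelyContinuousMul G]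
    {ι : Type*} [Infinite ι] {B : ι → Subgroup G} {H : Subgroup G}
    (hB : ∀ i, IsOpen (B i : Set G)) (hfin : ∀ᶠ i in cofinite, B i = H) :
    IsOpen ((⨅ i, B i : Subgroup G) : Set G) := by
  have hS := eventually_cofinite.mp hfin
  obtain ⟨i₀, hi₀⟩ := hfin.exists
  refine isOpen_mono (H₁ := H ⊓ ⨅ i ∈ hS.toFinset, B i) (le_iInf fun i => ?_) ?_
  · by_cases hi : i ∈ hS.toFinset
    · exact inf_le_right.trans (biInf_le B hi)
    · exact inf_le_left.trans (show B i = H by simpa using hi).ge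
  · simp only [coe_inf, coe_iInf]
    exact (hi₀ ▸ hB i₀).inter (hS.toFinset.finite_toSet.isOpen_biInter fun i _ => hB i)

end Subgroup

section PiDecomposition

variable {G : Type*} [Group G] {ι : Type*} {N : Subgroup G} {M : ι → Subgroup G}

/-- For `N = ∏ᵢ Mᵢ` this is the paper's `T_i` (see `topologicalClosure_iSup_ne_eq`). -/
def componentKer (e : N ≃* ∀ i, M i) (i : ι) : Subgroup G :=
  ((Pi.evalMonoidHom (fun j => M j) i).comp e.toMonoidHom).ker.map N.subtype

variable {e : N ≃* ∀ i, M i}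

theorem mem_componentKer {i : ι} {x : G} :
    x ∈ componentKer e i ↔ ∃ hx : x ∈ N, e ⟨x, hx⟩ i = 1 :=
  ⟨fun ⟨n, hn, hnx⟩ => hnx ▸ ⟨n.2, hn⟩, fun ⟨hx, h⟩ => ⟨⟨x, hx⟩, h, rfl⟩⟩

variable (e) in
theorem componentKer_le (i : ι) : componentKer e i ≤ N :=
  Subgroup.map_subtype_le _

theorem map_sup_componentKer [N.Normal] (A : Subgroup G) (i : ι) :
    (A ⊔ componentKer e i).map (QuotientGroup.mk' N) = A.map (QuotientGroup.mk' N) := by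
  rw [Subgroup.map_sup, (Subgroup.map_eq_bot_iff (componentKer e i)).mpr (by
    rw [QuotientGroup.ker_mk']; exact componentKer_le e i), sup_bot_eq]

section

variable [TopologicalSpace G]

theorem isClosed_componentKer [T1Space G] (hN : IsClosed (N : Set G)) (he : Continuous e) (i : ι) :
    IsClosed (componentKer e i : Set G) := by
  rw [componentKer, Subgroup.coe_map]
  exact hN.isClosedMap_subtype_val _
    (isClosed_singleton.preimage ((continuous_apply i).comp he))

theorem exists_finset_forall_mem (he' : Continuous e.symm) {A : Subgroup G}
    (hA : IsOpen (A : Set G)) :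
    ∃ S : Finset ι, ∀ n : N, (∀ i ∈ S, e n i = 1) → (n : G) ∈ A := by
  have hU : IsOpen (e.symm ⁻¹' (Subtype.val ⁻¹' (A : Set G))) :=
    (hA.preimage continuous_subtype_val).preimage he'
  obtain ⟨S, u, hu, hSu⟩ := isOpen_pi_iff.mp hU 1 (by simp [A.one_mem])
  refine ⟨S, fun n hn => ?_⟩
  simpa using @hSu (e n) fun i hi => by rw [hn i hi]; exact (hu i hi).2

end

variable [DecidableEq ι]

theorem Pi.mulSingle_mul_update_one {β : ι → Type*} [∀ i, Group (β i)]
    (g : ∀ i, β i) (i : ι) : Pi.mulSingle i (g i) * Function.update g i 1 = g := by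
  funext j
  by_cases h : j = i
  · subst h; simp
  · simp [h]

theorem Pi.commute_mulSingle_update_one {β : ι → Type*} [∀ i, Group (β i)]
    (g : ∀ i, β i) (i : ι) (x : β i) : Commute (Pi.mulSingle i x) (Function.update g i 1) := by
  funext j
  by_cases h : j = i
  · subst h; simp
  · simp [h]

theorem mem_iInf_sup_componentKer [N.Normal] {B : ι → Subgroup G}
    (hB : ∀ i, componentKer e i ≤ B i) {x : G} (hxB : ∀ i, x ∈ B i ⊔ N) {i₀ : ι}
    (hx : x ∈ B i₀) : x ∈ (⨅ i, B i) ⊔ componentKer e i₀ := by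
  choose b hb n hn hbn using fun i => Subgroup.mem_sup_of_normal_right.mp (hxB i)
  set c : N := e.symm (Function.update (fun i => e ⟨n i, hn i⟩ i) i₀ 1)
  have hc : (c : G) ∈ componentKer e i₀ := mem_componentKer.mpr ⟨c.2, by simp [c]⟩
  rw [show x = x * (c : G)⁻¹ * c by group]
  refine mul_mem (Subgroup.mem_sup_left (Subgroup.mem_iInf.mpr fun i => ?_))
    (Subgroup.mem_sup_right hc)
  rcases eq_or_ne i i₀ with rfl | hi
  · exact mul_mem hx (inv_mem (hB i hc))
  · have hk : n i * (c : G)⁻¹ ∈ componentKer e i := mem_componentKer.mpr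
      ⟨mul_mem (hn i) (inv_mem c.2), show e (⟨n i, hn i⟩ * c⁻¹) i = 1 by simp [c, hi]⟩
    rw [← hbn i, mul_assoc]
    exact mul_mem (hb i) (hB i hk)

variable {hle : ∀ i, M i ≤ N}
  (hcompat : ∀ i (x : M i), e ⟨x, hle i x.2⟩ = Pi.mulSingle i x)
include hcompat

theorem coe_symm_mulSingle (i : ι) (x : M i) : (e.symm (Pi.mulSingle i x) : G) = x := by
  rw [← hcompat, MulEquiv.symm_apply_apply]

theorem coe_symm_eq_mul_update (g : ∀ i, M i) (i : ι) :
    (e.symm g : G) = (g i : G) * (e.symm (Function.update g i 1) : G) := by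
  conv_lhs => rw [← Pi.mulSingle_mul_update_one g i]
  rw [map_mul, Subgroup.coe_mul, coe_symm_mulSingle hcompat]

theorem commute_coe_symm_update (g : ∀ i, M i) (i : ι) (x : M i) :
    Commute (x : G) (e.symm (Function.update g i 1) : G) := by
  simpa [coe_symm_mulSingle hcompat] using
    (Pi.commute_mulSingle_update_one g i x).map (N.subtype.comp e.symm.toMonoidHom)

theorem le_componentKer {i j : ι} (hij : j ≠ i) : M j ≤ componentKer e i := fun x hx =>
  mem_componentKer.mpr ⟨hle j hx, by rw [hcompat j ⟨x, hx⟩]; simp [hij.symm]⟩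

theorem le_componentKer_sup (i : ι) : N ≤ componentKer e i ⊔ M i := by
  intro x hx
  have hsplit := coe_symm_eq_mul_update hcompat (e ⟨x, hx⟩) i
  rw [MulEquiv.symm_apply_apply] at hsplit
  rw [show x = _ from hsplit]
  exact mul_mem (Subgroup.mem_sup_right (e ⟨x, hx⟩ i).2)
    (Subgroup.mem_sup_left (mem_componentKer.mpr ⟨Subtype.property _, by simp⟩))

theorem coe_symm_mem_of_forall_notMem_eq_one {X : Subgroup G} (S : Finset ι) {g : ∀ i, M i}
    (hgS : ∀ i ∉ S, g i = 1) (hgX : ∀ i, (g i : G) ∈ X) : (e.symm g : G) ∈ X := by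
  induction S using Finset.induction_on generalizing g with
  | empty =>
    rw [show g = 1 from funext fun i => hgS i (Finset.notMem_empty i)]
    simp
  | @insert a S _ ih =>
    rw [coe_symm_eq_mul_update hcompat g a]
    refine mul_mem (hgX a) (ih (fun j hj => ?_) fun j => ?_)
    · rcases eq_or_ne j a with rfl | hja
      · simp
      · simpa [hja, hj] using hgS j
    · rcases eq_or_ne j a with rfl | hja
      · simp
      · simpa [hja] using hgX j

variable [TopologicalSpace G]

theorem mem_of_forall_component_mem (he' : Continuous e.symm) {A : Subgroup G}
    (hA : IsOpen (A : Set G)) (n : N) (h : ∀ i, (e n i : G) ∈ A) : (n : G) ∈ A := by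
  obtain ⟨S, hS⟩ := exists_finset_forall_mem he' hA
  have hsplit : e n = S.piecewise (e n) 1 * S.piecewise (1 : ∀ i, M i) (e n) := by
    funext i; by_cases hi : i ∈ S <;> simp [hi]
  rw [← e.symm_apply_apply n, hsplit, map_mul, Subgroup.coe_mul]
  refine mul_mem (coe_symm_mem_of_forall_notMem_eq_one hcompat S (fun i hi => by simp [hi])
    fun i => ?_) (hS _ fun i hi => by simp [hi])
  by_cases hi : i ∈ S <;> simp [hi, h i]

theorem eventually_le_of_isOpen (he' : Continuous e.symm) {A : Subgroup G}
    (hA : IsOpen (A : Set G)) : ∀ᶠ i in cofinite, M i ≤ A := by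
  obtain ⟨S, hS⟩ := exists_finset_forall_mem he' hA
  refine S.finite_toSet.subset fun i hi => by_contra fun hiS => hi fun x hx => ?_
  exact hS ⟨x, hle i hx⟩ fun j hj => by
    rw [hcompat i ⟨x, hx⟩, Pi.mulSingle_eq_of_ne (fun h : j = i => hiS (by simpa [h] using hj))]

theorem eventually_sup_componentKer_eq (he' : Continuous e.symm) {A : Subgroup G}
    (hA : IsOpen (A : Set G)) : ∀ᶠ i in cofinite, A ⊔ componentKer e i = A ⊔ N :=
  (eventually_le_of_isOpen hcompat he' hA).mono fun i hi =>
    le_antisymm (sup_le_sup_left (componentKer_le e i) A) <| sup_le le_sup_left <|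
      (le_componentKer_sup hcompat i).trans (sup_le le_sup_right (hi.trans le_sup_left))

theorem eventually_sup_componentKer_eq_comap [N.Normal] {K : Subgroup (G ⧸ N)}
    (he' : Continuous e.symm) {A : Subgroup G} (hA : IsOpen (A : Set G))
    (hAK : A.map (QuotientGroup.mk' N) = K) :
    ∀ᶠ i in cofinite, A ⊔ componentKer e i = K.comap (QuotientGroup.mk' N) :=
  Subgroup.sup_eq_comap_of_map_eq hAK ▸ eventually_sup_componentKer_eq hcompat he' hA

theorem componentKer_subset_closure (he' : Continuous e.symm) (i : ι) :
    (componentKer e i : Set G) ⊆ closure (⨆ j ∈ {j | j ≠ i}, M j : Subgroup G) := by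
  intro x hx
  obtain ⟨hxN, hxi⟩ := mem_componentKer.mp hx
  set g := e ⟨x, hxN⟩
  have hlim : Tendsto (fun S : Finset ι => (e.symm (S.piecewise g 1) : G)) atTop (𝓝 x) := by
    have : Tendsto (fun S : Finset ι => S.piecewise g 1) atTop (𝓝 g) :=
      tendsto_pi_nhds.mpr fun j => tendsto_const_nhds.congr' <|
        (eventually_ge_atTop {j}).mono fun S hS =>
          (S.piecewise_eq_of_mem _ _ (hS (Finset.mem_singleton_self j))).symm
    have hcomp := ((continuous_subtype_val.comp he').tendsto g).comp this
    simp only [Function.comp_def, g, MulEquiv.symm_apply_apply] at hcomp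
    exact hcomp
  refine mem_closure_of_tendsto hlim (Eventually.of_forall fun S =>
    coe_symm_mem_of_forall_notMem_eq_one hcompat S (fun j hj => by simp [hj]) fun j => ?_)
  · by_cases hji : j = i
    · subst hji; by_cases hj : j ∈ S <;> simp [hj, hxi]
    · exact le_biSup (fun j => M j) hji (S.piecewise g 1 j).2

variable [IsTopologicalGroup G]

theorem topologicalClosure_iSup_ne_eq [T1Space G] (hN : IsClosed (N : Set G)) (he : Continuous e)
    (he' : Continuous e.symm) (i : ι) :
    (⨆ j ∈ {j | j ≠ i}, M j).topologicalClosure = componentKer e i :=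
  le_antisymm
    (Subgroup.topologicalClosure_minimal _ (iSup₂_le fun _ hj => le_componentKer hcompat hj)
      (isClosed_componentKer hN he i))
    (componentKer_subset_closure hcompat he' i)

theorem componentKer_normal [T1Space G] (hN : IsClosed (N : Set G)) (he : Continuous e)
    (he' : Continuous e.symm) (hnorm : ∀ i, (M i).Normal) (i : ι) :
    (componentKer e i).Normal := by
  rw [← topologicalClosure_iSup_ne_eq hcompat hN he he' i]
  have := Subgroup.biSup_normal {j | j ≠ i} M fun j _ => hnorm j
  exact Subgroup.is_normal_topologicalClosure _

end PiDecomposition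

section Primes

open Subgroup

variable {G : Type*} [Group G] [TopologicalSpace G] {N : Subgroup G}
  {M : Nat.Primes → Subgroup G} {hle : ∀ p, M p ≤ N} {e : N ≃* ∀ p, M p}
  (hproq : ∀ q : Nat.Primes, ∀ B : Subgroup (M q),
    IsOpen (B : Set (M q)) → ∃ k : ℕ, B.index = (q : ℕ) ^ k)
include hproq

theorem exists_relIndex_eq_pow {D : Subgroup G} (hD : IsOpen (D : Set G)) (p : Nat.Primes) :
    ∃ k, D.relIndex (M p) = (p : ℕ) ^ k :=
  hproq p _ (hD.preimage continuous_subtype_val)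

variable (hcompat : ∀ p (x : M p), e ⟨x, hle p x.2⟩ = Pi.mulSingle p x)
include hcompat

theorem exists_relIndex_sup_eq_pow (hnorm : ∀ p, (M p).Normal) {D : Subgroup G}
    (hD : IsOpen (D : Set G)) {p : Nat.Primes} (hpD : componentKer e p ≤ D) :
    ∃ k, D.relIndex (D ⊔ N) = (p : ℕ) ^ k := by
  have hDN : D ⊔ N = D ⊔ M p := le_antisymm
    (sup_le le_sup_left ((le_componentKer_sup hcompat p).trans (sup_le_sup_right hpD _)))
    (sup_le_sup_left (hle p) _)
  have := hnorm p
  rw [hDN, relIndex_sup_right_of_normal]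
  exact exists_relIndex_eq_pow hproq hD p

theorem componentKer_le_of_relIndex_eq_pow (hnorm : ∀ p, (M p).Normal)
    (he' : Continuous e.symm) {D : Subgroup G} (hD : IsOpen (D : Set G)) {p : Nat.Primes} {k : ℕ}
    (h : D.relIndex (D ⊔ N) = (p : ℕ) ^ k) : componentKer e p ≤ D := by
  have hMD : ∀ q ≠ p, M q ≤ D := fun q hq => by
    have := hnorm q
    obtain ⟨j, hj⟩ := exists_relIndex_eq_pow hproq hD q
    refine le_of_coprime_relIndex le_sup_left ((hle q).trans le_sup_right) ?_
    rw [hj, h]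
    exact .pow _ _ ((Nat.coprime_primes q.2 p.2).mpr fun h => hq (Subtype.ext h))
  intro x hx
  obtain ⟨hxN, hxp⟩ := mem_componentKer.mp hx
  refine mem_of_forall_component_mem hcompat he' hD ⟨x, hxN⟩ fun q => ?_
  rcases eq_or_ne q p with rfl | hq
  · rw [hxp]; exact D.one_mem
  · exact hMD q hq (Subtype.property _)

theorem component_mem_of_mem [IsTopologicalGroup G] [CompactSpace G] (he' : Continuous e.symm)
    {A : Subgroup G} (hA : IsOpen (A : Set G)) {n : N} (hn : (n : G) ∈ A) (p : Nat.Primes) :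
    (e n p : G) ∈ A := by
  obtain ⟨⟨⟨C, hCopen⟩, hCnormal⟩, hCA⟩ :=
    IsTopologicalGroup.exist_openNormalSubgroup_sub_clopen_nhds_of_one
      ⟨A.isClosed_of_isOpen hA, hA⟩ A.one_mem
  have := C.quotient_finite_of_isOpen hCopen
  have hC : C.index ≠ 0 := index_ne_zero_of_finite
  have hrel : ∀ q : Nat.Primes,
      ∃ j, C.relIndex (M q) = (q : ℕ) ^ j ∧ (q : ℕ) ^ j ∣ C.index :=
    fun q => by
      obtain ⟨j, hj⟩ := exists_relIndex_eq_pow hproq hCopen q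
      exact ⟨j, hj, hj ▸ relIndex_dvd_index_of_normal C (M q)⟩
  -- With `[G : C] = p^a * r`, `p ∤ r`: the `p`-component `u` has `u ^ p^a ∈ C`, and the
  -- cofactor `t` of `n = u * t` has `t ^ r ∈ C`, as each of its components does.
  have hsplit := coe_symm_eq_mul_update hcompat (e n) p
  rw [MulEquiv.symm_apply_apply] at hsplit
  refine mem_of_commute_of_coprime (C := C) hCA (commute_coe_symm_update hcompat (e n) p _)
    (hsplit ▸ hn) ((Nat.coprime_ordCompl p.2 hC).pow_left (C.index.factorization p)) ?_ ?_
  · obtain ⟨j, hj, hdvd⟩ := hrel p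
    exact pow_mem_of_relIndex_dvd C (e n p).2 (hj ▸ (p.2.pow_dvd_iff_dvd_ordProj hC).mp hdvd)
  · rw [← SubmonoidClass.coe_pow]
    refine mem_of_forall_component_mem hcompat he' hCopen _ fun q => ?_
    rw [map_pow, Pi.pow_apply, SubmonoidClass.coe_pow, MulEquiv.apply_symm_apply]
    rcases eq_or_ne q p with rfl | hq
    · simp
    · obtain ⟨j, hj, hdvd⟩ := hrel q
      rw [Function.update_of_ne hq]
      refine pow_mem_of_relIndex_dvd C (e n q).2 (hj ▸ Nat.Coprime.dvd_of_dvd_mul_left ?_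
        ((Nat.ordProj_mul_ordCompl_eq_self C.index p).symm ▸ hdvd))
      exact .pow _ _ ((Nat.coprime_primes q.2 p.2).mpr fun h => hq (Subtype.ext h))

theorem component_mem_of_mem_sup [IsTopologicalGroup G] [CompactSpace G]
    (he' : Continuous e.symm) {A : Subgroup G} (hA : IsOpen (A : Set G)) {p : Nat.Primes}
    [(componentKer e p).Normal] {n : N} (hn : (n : G) ∈ A ⊔ componentKer e p) :
    (e n p : G) ∈ A := by
  obtain ⟨a, ha, s, hs, has⟩ := mem_sup_of_normal_right.mp hn
  obtain ⟨hsN, hsp⟩ := mem_componentKer.mp hs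
  have haN : a ∈ N := by simpa [← has] using mul_mem n.2 (inv_mem hsN)
  rw [show n = ⟨a, haN⟩ * ⟨s, hsN⟩ from Subtype.ext has.symm, map_mul, Pi.mul_apply, hsp,
    mul_one]
  exact component_mem_of_mem hproq hcompat he' hA ha p

theorem iInf_sup_componentKer_eq [IsTopologicalGroup G] [CompactSpace G] [N.Normal]
    [∀ p, (componentKer e p).Normal] (he' : Continuous e.symm) {A : Subgroup G}
    (hA : IsOpen (A : Set G)) : ⨅ p, (A ⊔ componentKer e p) = A := by
  refine le_antisymm (fun x hx => ?_) (le_iInf fun p => le_sup_left)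
  rw [Subgroup.mem_iInf] at hx
  obtain ⟨a, ha, y, hy, rfl⟩ := mem_sup_of_normal_right.mp
    (sup_le_sup_left (componentKer_le e ⟨2, Nat.prime_two⟩) A (hx ⟨2, Nat.prime_two⟩))
  refine mul_mem ha (mem_of_forall_component_mem hcompat he' hA ⟨y, hy⟩ fun p =>
    component_mem_of_mem_sup hproq hcompat he' hA ?_)
  simpa using mul_mem (mem_sup_left (inv_mem ha)) (hx p)

variable [N.Normal] {K : Subgroup (G ⧸ N)}

theorem exists_relIndex_comap_eq_pow [IsTopologicalGroup G] (hnorm : ∀ p, (M p).Normal)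
    {A : Subgroup G} (hA : IsOpen (A : Set G)) (hAK : A.map (QuotientGroup.mk' N) = K)
    (p : Nat.Primes) :
    ∃ k, (A ⊔ componentKer e p).relIndex (K.comap (QuotientGroup.mk' N)) = (p : ℕ) ^ k := by
  rw [← sup_eq_comap_of_map_eq ((map_sup_componentKer A p).trans hAK)]
  exact exists_relIndex_sup_eq_pow hproq hcompat hnorm (isOpen_mono le_sup_left hA) le_sup_right

theorem iInf_sup_componentKer_eq_of_relIndex (hnorm : ∀ p, (M p).Normal)
    (he' : Continuous e.symm) {B : Nat.Primes → Subgroup G}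
    (hB : ∀ p, IsOpen (B p : Set G) ∧ (B p).map (QuotientGroup.mk' N) = K ∧
      ∃ k, (B p).relIndex (K.comap (QuotientGroup.mk' N)) = (p : ℕ) ^ k)
    (p : Nat.Primes) : (⨅ q, B q) ⊔ componentKer e p = B p := by
  have hBN : ∀ q, B q ⊔ N = K.comap (QuotientGroup.mk' N) := fun q =>
    sup_eq_comap_of_map_eq (hB q).2.1
  have hT : ∀ q, componentKer e q ≤ B q := fun q => by
    obtain ⟨k, hk⟩ := (hB q).2.2
    exact componentKer_le_of_relIndex_eq_pow hproq hcompat hnorm he' (hB q).1 (hBN q ▸ hk)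
  refine le_antisymm (sup_le (iInf_le B p) (hT p)) fun x hx =>
    mem_iInf_sup_componentKer hT (fun q => ?_) hx
  rw [hBN q, ← hBN p]
  exact mem_sup_left hx

end Primes

theorem stmt7_general {G : Type*} [Group G] [TopologicalSpace G] [IsTopologicalGroup G]
    [CompactSpace G] [T2Space G]
    (Nhat : Subgroup G) [Nhat.Normal] (hNopen : IsOpen (Nhat : Set G))
    (Np : Nat.Primes → Subgroup G) (hle : ∀ q, Np q ≤ Nhat)
    (hnorm : ∀ q, (Np q).Normal)
    (hproq : ∀ q : Nat.Primes, ∀ B : Subgroup (Np q),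
      IsOpen (B : Set (Np q)) → ∃ k : ℕ, B.index = (q : ℕ) ^ k)
    (e : ↥Nhat ≃* ∀ q : Nat.Primes, ↥(Np q))
    (he : Continuous e) (he' : Continuous e.symm)
    (hcompat : ∀ (q : Nat.Primes) (x : ↥(Np q)),
      e ⟨(x : G), hle q x.2⟩ = Pi.mulSingle q x)
    (Tp : Nat.Primes → Subgroup G)
    (hTp : ∀ p : Nat.Primes, ((Tp p : Set G)) =
      closure ((⨆ q ∈ {q : Nat.Primes | q ≠ p}, Np q : Subgroup G) : Set G))
    (K : Subgroup (G ⧸ Nhat)) :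
    Set.BijOn (fun (A : Subgroup G) => fun p : Nat.Primes => A ⊔ Tp p)
        {A : Subgroup G | IsOpen (A : Set G) ∧
          A.map (QuotientGroup.mk' Nhat) = K}
        {Ap : Nat.Primes → Subgroup G |
          (∀ p, IsOpen ((Ap p : Set G)) ∧
            (Ap p).map (QuotientGroup.mk' Nhat) = K ∧
            ∃ k : ℕ, (Ap p).relIndex (K.comap (QuotientGroup.mk' Nhat)) =
              (p : ℕ) ^ k) ∧
          ∀ᶠ p : Nat.Primes in Filter.cofinite,
            Ap p = K.comap (QuotientGroup.mk' Nhat)} ∧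
      ∀ A : Subgroup G, IsOpen (A : Set G) →
        A.map (QuotientGroup.mk' Nhat) = K →
        A.relIndex (K.comap (QuotientGroup.mk' Nhat)) =
          ∏ᶠ p : Nat.Primes,
            (A ⊔ Tp p).relIndex (K.comap (QuotientGroup.mk' Nhat)) := by
  have hNc : IsClosed (Nhat : Set G) := Nhat.isClosed_of_isOpen hNopen
  obtain rfl : Tp = componentKer e := funext fun p => SetLike.coe_injective <| by
    rw [hTp, ← topologicalClosure_iSup_ne_eq hcompat hNc he he' p,
      Subgroup.topologicalClosure_coe]
  have := componentKer_normal hcompat hNc he he' hnorm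
  have hinf := fun {A : Subgroup G} (hA : IsOpen (A : Set G)) =>
    iInf_sup_componentKer_eq hproq hcompat he' hA
  refine ⟨⟨?_, ?_, ?_⟩, fun A hA hAK => ?_⟩
  · rintro A ⟨hA, hAK⟩
    exact ⟨fun p => ⟨Subgroup.isOpen_mono le_sup_left hA, (map_sup_componentKer A p).trans hAK,
      exists_relIndex_comap_eq_pow hproq hcompat hnorm hA hAK p⟩,
      eventually_sup_componentKer_eq_comap hcompat he' hA hAK⟩
  · rintro A ⟨hA, -⟩ A' ⟨hA', -⟩ h
    rw [← hinf hA, ← hinf hA']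
    exact iInf_congr (congrFun h)
  · rintro Ap ⟨hAp, hfin⟩
    have hsup := iInf_sup_componentKer_eq_of_relIndex hproq hcompat hnorm he' hAp
    refine ⟨⨅ p, Ap p,
      ⟨Subgroup.isOpen_iInf_of_eventually_eq (fun p => (hAp p).1) hfin, ?_⟩, funext hsup⟩
    obtain ⟨p₀⟩ : Nonempty Nat.Primes := inferInstance
    rw [← map_sup_componentKer (e := e) _ p₀, hsup p₀]
    exact (hAp p₀).2.1
  · conv_lhs => rw [← hinf hA]
    exact Subgroup.relIndex_iInf_eq_finprod
      (exists_relIndex_comap_eq_pow hproq hcompat hnorm hA hAK)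
      (eventually_sup_componentKer_eq_comap hcompat he' hA hAK)

/-- In the profinite Sylow-product setup, the map `A ↦ (A·T_p)_p` is a bijection
from the open subgroups `A` of `Ĝ` with `π(A) = K` onto the tuples `(A_p)_p` of
open subgroups with `π(A_p) = K`, `[π⁻¹(K) : A_p]` a power of `p`, and
`A_p = π⁻¹(K)` for all but finitely many `p`; moreover
`[π⁻¹(K) : A] = ∏_p [π⁻¹(K) : A·T_p]`. -/
theorem stmt7 {G : Type*} [Group G] [TopologicalSpace G] [IsTopologicalGroup G]
    [CompactSpace G] [TotallyDisconnectedSpace G] [T2Space G]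
    (Nhat : Subgroup G) [Nhat.Normal] (hNopen : IsOpen (Nhat : Set G))
    (Np : Nat.Primes → Subgroup G) (hle : ∀ q, Np q ≤ Nhat)
    (hnorm : ∀ q, (Np q).Normal)
    (hproq : ∀ q : Nat.Primes, ∀ B : Subgroup (Np q),
      IsOpen (B : Set (Np q)) → ∃ k : ℕ, B.index = (q : ℕ) ^ k)
    (e : ↥Nhat ≃* ∀ q : Nat.Primes, ↥(Np q))
    (he : Continuous e) (he' : Continuous e.symm)
    (hcompat : ∀ (q : Nat.Primes) (x : ↥(Np q)),
      e ⟨(x : G), hle q x.2⟩ = Pi.mulSingle q x)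
    (Tp : Nat.Primes → Subgroup G)
    (hTp : ∀ p : Nat.Primes, ((Tp p : Set G)) =
      closure ((⨆ q ∈ {q : Nat.Primes | q ≠ p}, Np q : Subgroup G) : Set G))
    (K : Subgroup (G ⧸ Nhat)) :
    Set.BijOn (fun (A : Subgroup G) => fun p : Nat.Primes => A ⊔ Tp p)
        {A : Subgroup G | IsOpen (A : Set G) ∧
          A.map (QuotientGroup.mk' Nhat) = K}
        {Ap : Nat.Primes → Subgroup G |
          (∀ p, IsOpen ((Ap p : Set G)) ∧
            (Ap p).map (QuotientGroup.mk' Nhat) = K ∧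
            ∃ k : ℕ, (Ap p).relIndex (K.comap (QuotientGroup.mk' Nhat)) =
              (p : ℕ) ^ k) ∧
          ∀ᶠ p : Nat.Primes in Filter.cofinite,
            Ap p = K.comap (QuotientGroup.mk' Nhat)} ∧
      ∀ A : Subgroup G, IsOpen (A : Set G) →
        A.map (QuotientGroup.mk' Nhat) = K →
        A.relIndex (K.comap (QuotientGroup.mk' Nhat)) =
          ∏ᶠ p : Nat.Primes,
            (A ⊔ Tp p).relIndex (K.comap (QuotientGroup.mk' Nhat)) :=
  stmt7_general Nhat hNopen Np hle hnorm hproq e he he' hcompat Tp hTp K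
end

section
/- Let H be an open subgroup of ℤ_p^h (p-adic integers) generated by the rows t_1,…,t_h of an upper triangular matrix t ∈ Tr(h, ℤ_p) with nonzero diagonal. Then the index of H in ℤ_p^h equals ∏_{i=1}^h |t_ii|_p^{-1}. -/
/-!
By the Smith normal form, a full-rank lattice `N` in a free `ℤ_p`-module `M` has bases `(eᵢ)` of
`M` and `(aᵢ eᵢ)` of `N`, so `M ⧸ N ≅ ∏ ℤ_p ⧸ (aᵢ)` while `∏ aᵢ` is, up to a unit, the
determinant of any basis of `N` with respect to any basis of `M`. As `ℤ_p ⧸ (a) ≅ ℤ ⧸ p^{v(a)}`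
has `‖a‖⁻¹` elements and units have norm one, the rows of a matrix `A` span a lattice of index
`‖det A‖⁻¹`; for upper triangular `t`, `det t = ∏ tᵢᵢ`.
-/

open Module

namespace Submodule

variable {ι R M : Type*} [CommRing R] [IsDomain R] [IsPrincipalIdealRing R]
  [AddCommGroup M] [Module R M] [Fintype ι]

theorem card_quotient_eq_prod_card_quotient_smithNormalFormCoeffs (N : Submodule R M)
    (b : Basis ι R M) (h : finrank R N = finrank R M) :
    Nat.card (M ⧸ N) = ∏ i, Nat.card (R ⧸ Ideal.span {smithNormalFormCoeffs b h i}) := by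
  rw [Nat.card_congr (N.quotientEquivPiSpan b h).toEquiv, Nat.card_pi]

theorem associated_det_prod_smithNormalFormCoeffs [DecidableEq ι] (N : Submodule R M)
    (b : Basis ι R M) (bN : Basis ι R N) (h : finrank R N = finrank R M) :
    Associated (b.det ((↑) ∘ bN)) (∏ i, smithNormalFormCoeffs b h i) := by
  set b' := smithNormalFormTopBasis b h
  set bN' := smithNormalFormBotBasis b h
  have hdiag : b'.det ((↑) ∘ bN') = ∏ i, smithNormalFormCoeffs b h i := by
    have : ((↑) ∘ bN' : ι → M) = fun i ↦ smithNormalFormCoeffs b h i • b' i :=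
      funext (smithNormalFormBotBasis_def b h)
    rw [this, AlternatingMap.map_smul_univ, b'.det_self, smul_eq_mul, mul_one]
  have hb : b.det ((↑) ∘ bN) = b.det b' * b'.det ((↑) ∘ bN) :=
    congrArg (· ((↑) ∘ bN)) (b.det.eq_smul_basis_det b')
  have hbN : b'.det ((↑) ∘ bN) = b'.det ((↑) ∘ bN') * bN'.det bN :=
    congrArg (· bN) ((b'.det.compLinearMap N.subtype).eq_smul_basis_det bN')
  rw [hb, hbN, hdiag]
  exact (associated_unit_mul_left _ _ (b.isUnit_det b')).trans
    (associated_mul_unit_left _ _ (bN'.isUnit_det bN))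

end Submodule

namespace PadicInt

variable {p : ℕ} [Fact p.Prime]

theorem card_quotient_span_singleton {a : ℤ_[p]} (ha : a ≠ 0) :
    (Nat.card (ℤ_[p] ⧸ Ideal.span {a}) : ℝ) = ‖a‖⁻¹ := by
  have hspan : Ideal.span {a} = RingHom.ker (toZModPow (p := p) a.valuation) := by
    rw [ker_toZModPow, Ideal.span_singleton_eq_span_singleton]
    exact Associated.symm ⟨unitCoeff ha, by rw [mul_comm, ← unitCoeff_spec ha]⟩
  rw [hspan, Nat.card_congr (RingHom.quotientKerEquivOfSurjective
    (ZMod.ringHom_surjective _)).toEquiv, Nat.card_zmod, norm_eq_zpow_neg_valuation ha]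
  simp

theorem norm_eq_of_associated {a b : ℤ_[p]} (h : Associated a b) : ‖a‖ = ‖b‖ := by
  obtain ⟨u, rfl⟩ := h
  rw [norm_mul, norm_units, mul_one]

theorem index_toAddSubgroup_eq_norm_det_inv {ι M : Type*} [Fintype ι] [DecidableEq ι]
    [AddCommGroup M] [Module ℤ_[p] M] (b : Basis ι ℤ_[p] M) (N : Submodule ℤ_[p] M)
    (bN : Basis ι ℤ_[p] N) :
    (N.toAddSubgroup.index : ℝ) = ‖b.det ((↑) ∘ bN)‖⁻¹ := by
  have h : finrank ℤ_[p] N = finrank ℤ_[p] M := by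
    rw [finrank_eq_card_basis bN, finrank_eq_card_basis b]
  rw [norm_eq_of_associated (N.associated_det_prod_smithNormalFormCoeffs b bN h), norm_prod,
    ← Finset.prod_inv_distrib]
  change (Nat.card (M ⧸ N) : ℝ) = _
  rw [N.card_quotient_eq_prod_card_quotient_smithNormalFormCoeffs b h, Nat.cast_prod]
  exact Finset.prod_congr rfl fun i _ ↦
    card_quotient_span_singleton (Submodule.smithNormalFormCoeffs_ne_zero b h i)

theorem index_span_rows_eq_norm_det_inv {ι : Type*} [Fintype ι] [DecidableEq ι]
    (A : Matrix ι ι ℤ_[p]) (hA : A.det ≠ 0) :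
    ((Submodule.span ℤ_[p] (Set.range A)).toAddSubgroup.index : ℝ) = ‖A.det‖⁻¹ := by
  have hli := Matrix.linearIndependent_rows_of_det_ne_zero hA
  have hrows : Matrix.of ((↑) ∘ Basis.span hli) = A :=
    funext fun i ↦ congrArg Subtype.val (Basis.span_apply hli i)
  rw [index_toAddSubgroup_eq_norm_det_inv (Pi.basisFun ℤ_[p] ι) _ (Basis.span hli),
    Pi.basisFun_det_apply, hrows]

end PadicInt

/-- Let `H ≤ ℤ_p^h` be the subgroup generated by the rows `t₁, …, t_h` of an
upper triangular matrix `t` over `ℤ_p` with nonzero diagonal.  Then the index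
of `H` in `ℤ_p^h` equals `∏ᵢ |t_ii|_p⁻¹`. -/
theorem stmt11 (p : ℕ) [Fact p.Prime] (h : ℕ)
    (t : Matrix (Fin h) (Fin h) ℤ_[p])
    (htri : ∀ i j : Fin h, j < i → t i j = 0)
    (hdiag : ∀ i : Fin h, t i i ≠ 0) :
    (((Submodule.span ℤ_[p] (Set.range fun i : Fin h => t i)).toAddSubgroup.index : ℝ)) =
      ∏ i : Fin h, ‖t i i‖⁻¹ := by
  have hdet : t.det = ∏ i, t i i := Matrix.det_of_isUpperTriangular htri
  have hdet_ne : t.det ≠ 0 := hdet ▸ Finset.prod_ne_zero_iff.mpr fun i _ ↦ hdiag i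
  rw [PadicInt.index_span_rows_eq_norm_det_inv t hdet_ne, hdet, norm_prod,
    Finset.prod_inv_distrib]
end

section
/- Let 1 → N → G → F → 1 be exact with F finite, and let B ≤ N be a finite-index subgroup of N. Suppose A ⊆ G is a union A = B ∪ ⋃_{f∈K∖{1}} g_f n_f B where K ≤ F, π(g_f)=f, n_f ∈ N, and exactly one coset appears per f ∈ K. Then A is a subgroup of G if and only if: (1) (g_f n_f)^{-1} b (g_f n_f) ∈ B for all b in a generating set of B and all f ∈ K∖{1}; (2) (g_{ff'} n_{ff'})^{-1} g_f n_f g_{f'} n_{f'} ∈ B for all f, f' ∈ K∖{1} with ff' ≠ 1; (3) g_f n_f g_{f^{-1}} n_{f^{-1}} ∈ B for all f ∈ K∖{1}. -/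
/-!
Write `c f = g f * n f`; the set is then `⋃_{f ∈ K} c f • B`, the `f = 1` term being `B`.
Because `π ∘ c = id` and `B ≤ ker π`, every element `x` of the set lies in `c (π x) • B`. Applied
to `(c f)⁻¹ b c f` and to `c f c f'`, this shows that if the set is a subgroup, then every `c f`
normalises `B` and `c f c f' ∈ c (f f') • B` for all `f, f' ∈ K`. Conversely these two facts make
the set closed under products, and under inverses because `c f c f⁻¹ ∈ B`. Condition (3) is the
case `f f' = 1` of the second fact, and (1) need only be checked on generators of `B` since
conjugation is a homomorphism.
-/

theorem Subgroup.forall_mem_diff_one_iff {Q : Type*} [Group Q] {K : Subgroup Q} {P : Q → Prop}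
    (h1 : P 1) : (∀ f ∈ (K : Set Q) \ {1}, P f) ↔ ∀ f ∈ K, P f :=
  ⟨fun h f hf => by
    by_cases hf1 : f = 1
    · exact hf1 ▸ h1
    · exact h f ⟨hf, hf1⟩, fun h f hf => h f hf.1⟩

theorem Subgroup.forall_conj_mem_iff_of_closure_eq {G : Type*} [Group G] {B : Subgroup G}
    {S : Set G} (hS : Subgroup.closure S = B) (x : G) :
    (∀ b ∈ S, x⁻¹ * b * x ∈ B) ↔ ∀ b ∈ B, x⁻¹ * b * x ∈ B := by
  have hcomap : ∀ b, b ∈ B.comap (MulAut.conj x⁻¹).toMonoidHom ↔ x⁻¹ * b * x ∈ B := by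
    simp
  simp_rw [← hcomap]
  rw [← SetLike.le_def, ← hS, Subgroup.closure_le]
  rfl

section CosetUnion

variable {G Q : Type*} [Group G] [Group Q]

def cosetUnion (c : Q → G) (K : Subgroup Q) (B : Subgroup G) : Set G :=
  ⋃ f ∈ (K : Set Q), (c f * ·) '' B

variable {c : Q → G} {K : Subgroup Q} {B : Subgroup G}

theorem mem_cosetUnion {x : G} :
    x ∈ cosetUnion c K B ↔ ∃ f ∈ K, ∃ b ∈ B, c f * b = x := by
  simp only [cosetUnion, Set.mem_iUnion, Set.mem_image, SetLike.mem_coe, exists_prop]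

theorem mul_mem_cosetUnion {f : Q} (hf : f ∈ K) {b : G} (hb : b ∈ B) :
    c f * b ∈ cosetUnion c K B :=
  mem_cosetUnion.2 ⟨f, hf, b, hb, rfl⟩

theorem cosetUnion_eq_union_biUnion_diff_one (hc1 : c 1 = 1) :
    cosetUnion c K B = (B : Set G) ∪ ⋃ f ∈ (K : Set Q) \ {1}, (c f * ·) '' B := by
  conv_lhs => rw [cosetUnion, ← Set.insert_eq_of_mem K.one_mem, ← Set.insert_sdiff_singleton,
    Set.biUnion_insert, hc1]
  simp

theorem inv_mul_mem_of_mem_cosetUnion {φ : G →* Q} (hc : ∀ f, φ (c f) = f) (hB : B ≤ φ.ker)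
    {x : G} (hx : x ∈ cosetUnion c K B) : (c (φ x))⁻¹ * x ∈ B := by
  obtain ⟨f, -, b, hb, rfl⟩ := mem_cosetUnion.1 hx
  rwa [map_mul, hc, MonoidHom.mem_ker.1 (hB hb), mul_one, inv_mul_cancel_left]

theorem conj_mem_and_inv_mul_mul_mem_of_coe_eq_cosetUnion {φ : G →* Q}
    (hc : ∀ f, φ (c f) = f) (hc1 : c 1 = 1) (hB : B ≤ φ.ker)
    {A : Subgroup G} (hA : (A : Set G) = cosetUnion c K B) :
    (∀ f ∈ K, ∀ b ∈ B, (c f)⁻¹ * b * c f ∈ B) ∧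
      ∀ f ∈ K, ∀ f' ∈ K, (c (f * f'))⁻¹ * c f * c f' ∈ B := by
  have hmem : ∀ {x}, x ∈ A → (c (φ x))⁻¹ * x ∈ B := fun hx =>
    inv_mul_mem_of_mem_cosetUnion hc hB (by rwa [← hA])
  have hcA : ∀ {f}, f ∈ K → c f ∈ A := fun hf => by
    simpa [← SetLike.mem_coe, hA] using mul_mem_cosetUnion (c := c) hf B.one_mem
  have hBA : ∀ {b}, b ∈ B → b ∈ A := fun hb => by
    simpa [← SetLike.mem_coe, hA, hc1] using mul_mem_cosetUnion (c := c) K.one_mem hb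
  refine ⟨fun f hf b hb => ?_, fun f hf f' hf' => ?_⟩
  · simpa [hc, MonoidHom.mem_ker.1 (hB hb), hc1] using
      hmem (A.mul_mem (A.mul_mem (A.inv_mem (hcA hf)) (hBA hb)) (hcA hf))
  · simpa [hc, mul_assoc] using hmem (A.mul_mem (hcA hf) (hcA hf'))

theorem exists_subgroup_coe_eq_cosetUnion (hc1 : c 1 = 1)
    (hconj : ∀ f ∈ K, ∀ b ∈ B, (c f)⁻¹ * b * c f ∈ B)
    (hmul : ∀ f ∈ K, ∀ f' ∈ K, (c (f * f'))⁻¹ * c f * c f' ∈ B) :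
    ∃ A : Subgroup G, (A : Set G) = cosetUnion c K B := by
  have one_mem : (1 : G) ∈ cosetUnion c K B := by
    simpa [hc1] using mul_mem_cosetUnion (c := c) K.one_mem B.one_mem
  have mul_mem : ∀ {x y}, x ∈ cosetUnion c K B → y ∈ cosetUnion c K B →
      x * y ∈ cosetUnion c K B := by
    rintro _ _ hx hy
    obtain ⟨f, hf, b, hb, rfl⟩ := mem_cosetUnion.1 hx
    obtain ⟨f', hf', b', hb', rfl⟩ := mem_cosetUnion.1 hy
    have hprod : c f * b * (c f' * b') =
        c (f * f') * ((c (f * f'))⁻¹ * c f * c f' * ((c f')⁻¹ * b * c f') * b') := by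
      group
    rw [hprod]
    exact mul_mem_cosetUnion (K.mul_mem hf hf')
      (B.mul_mem (B.mul_mem (hmul f hf f' hf') (hconj f' hf' b hb)) hb')
  have inv_mem : ∀ {x}, x ∈ cosetUnion c K B → x⁻¹ ∈ cosetUnion c K B := by
    rintro _ hx
    obtain ⟨f, hf, b, hb, rfl⟩ := mem_cosetUnion.1 hx
    have hinv : c f * c f⁻¹ ∈ B := by
      simpa [hc1] using hmul f hf f⁻¹ (K.inv_mem hf)
    have heq : (c f * b)⁻¹ = c f⁻¹ * ((c f⁻¹)⁻¹ * b⁻¹ * c f⁻¹ * (c f * c f⁻¹)⁻¹) := by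
      group
    rw [heq]
    exact mul_mem_cosetUnion (K.inv_mem hf)
      (B.mul_mem (hconj f⁻¹ (K.inv_mem hf) b⁻¹ (B.inv_mem hb)) (B.inv_mem hinv))
  exact ⟨{ carrier := cosetUnion c K B
           one_mem' := one_mem
           mul_mem' := mul_mem
           inv_mem' := inv_mem }, rfl⟩

theorem exists_subgroup_coe_eq_cosetUnion_iff {φ : G →* Q} (hc : ∀ f, φ (c f) = f)
    (hc1 : c 1 = 1) (hB : B ≤ φ.ker) :
    (∃ A : Subgroup G, (A : Set G) = cosetUnion c K B) ↔
      (∀ f ∈ K, ∀ b ∈ B, (c f)⁻¹ * b * c f ∈ B) ∧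
        ∀ f ∈ K, ∀ f' ∈ K, (c (f * f'))⁻¹ * c f * c f' ∈ B :=
  ⟨fun ⟨_, hA⟩ => conj_mem_and_inv_mul_mul_mem_of_coe_eq_cosetUnion hc hc1 hB hA,
    fun h => exists_subgroup_coe_eq_cosetUnion hc1 h.1 h.2⟩

theorem forall_inv_mul_mul_mem_iff (hc1 : c 1 = 1) :
    (∀ f ∈ K, ∀ f' ∈ K, (c (f * f'))⁻¹ * c f * c f' ∈ B) ↔
      (∀ f ∈ (K : Set Q) \ {1}, ∀ f' ∈ (K : Set Q) \ {1}, f * f' ≠ 1 →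
          (c (f * f'))⁻¹ * c f * c f' ∈ B) ∧
        ∀ f ∈ (K : Set Q) \ {1}, c f * c f⁻¹ ∈ B := by
  refine ⟨fun h => ⟨fun f hf f' hf' _ => h f hf.1 f' hf'.1, fun f hf => ?_⟩,
    fun ⟨hmul, hinv⟩ => ?_⟩
  · simpa [hc1] using h f hf.1 f⁻¹ (K.inv_mem hf.1)
  · refine (Subgroup.forall_mem_diff_one_iff (by simp [hc1])).1 fun f hf => ?_
    refine (Subgroup.forall_mem_diff_one_iff (by simp [hc1])).1 fun f' hf' => ?_
    by_cases hff' : f * f' = 1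
    · obtain rfl := eq_inv_of_mul_eq_one_right hff'
      simpa [hc1] using hinv f hf
    · exact hmul f hf f' hf' hff'

end CosetUnion

theorem stmt14_general {G : Type*} [Group G] (N : Subgroup G) [N.Normal]
    (g : (G ⧸ N) → G) (hg : ∀ f, QuotientGroup.mk' N (g f) = f)
    (hg1 : g 1 = 1)
    (K : Subgroup (G ⧸ N))
    (n : (G ⧸ N) → G) (hn : ∀ f, n f ∈ N) (hn1 : n 1 = 1)
    (B : Subgroup G) (hBN : B ≤ N)
    (S : Set G) (hS : Subgroup.closure S = B) :
    (∃ A : Subgroup G, (A : Set G) =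
        (B : Set G) ∪
          ⋃ f ∈ ((K : Set (G ⧸ N)) \ {1}),
            (fun b => g f * n f * b) '' (B : Set G)) ↔
      ((∀ f ∈ ((K : Set (G ⧸ N)) \ {1}), ∀ b ∈ S,
          (g f * n f)⁻¹ * b * (g f * n f) ∈ B) ∧
        (∀ f ∈ ((K : Set (G ⧸ N)) \ {1}), ∀ f' ∈ ((K : Set (G ⧸ N)) \ {1}),
          f * f' ≠ 1 →
          (g (f * f') * n (f * f'))⁻¹ * (g f * n f) * (g f' * n f') ∈ B) ∧
        (∀ f ∈ ((K : Set (G ⧸ N)) \ {1}),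
          g f * n f * (g f⁻¹ * n f⁻¹) ∈ B)) := by
  have hc : ∀ f, QuotientGroup.mk' N (g f * n f) = f := fun f => by
    rw [map_mul, hg, QuotientGroup.mk'_apply, (QuotientGroup.eq_one_iff (n f)).2 (hn f), mul_one]
  have hc1 : g 1 * n 1 = 1 := by rw [hg1, hn1, mul_one]
  have hB : B ≤ (QuotientGroup.mk' N).ker := by rwa [QuotientGroup.ker_mk']
  rw [← cosetUnion_eq_union_biUnion_diff_one (c := fun f => g f * n f) hc1,
    exists_subgroup_coe_eq_cosetUnion_iff hc hc1 hB]
  refine and_congr ?_ (forall_inv_mul_mul_mem_iff (c := fun f => g f * n f) hc1)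
  rw [← Subgroup.forall_mem_diff_one_iff fun b hb => by simpa [hg1, hn1] using hb]
  exact forall₂_congr fun f _ => (Subgroup.forall_conj_mem_iff_of_closure_eq hS _).symm

/-- Subgroup criterion for a union of cosets `B ∪ ⋃_{f ∈ K∖{1}} g_f n_f B` in a
group `G` with normal subgroup `N` of finite quotient `F = G ⧸ N`: the union is
a subgroup iff (1) conjugation by each `g_f n_f` sends a generating set of `B`
into `B`; (2) `(g_{ff'} n_{ff'})⁻¹ g_f n_f g_{f'} n_{f'} ∈ B` for `f, f' ∈ K∖{1}`
with `ff' ≠ 1`; and (3) `g_f n_f g_{f⁻¹} n_{f⁻¹} ∈ B` for `f ∈ K∖{1}`. -/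
theorem stmt14 {G : Type*} [Group G] (N : Subgroup G) [N.Normal]
    [Finite (G ⧸ N)]
    (g : (G ⧸ N) → G) (hg : ∀ f, QuotientGroup.mk' N (g f) = f)
    (hg1 : g 1 = 1) (hginv : ∀ f, g f⁻¹ = (g f)⁻¹)
    (K : Subgroup (G ⧸ N))
    (n : (G ⧸ N) → G) (hn : ∀ f, n f ∈ N) (hn1 : n 1 = 1)
    (B : Subgroup G) (hBN : B ≤ N) (hBfin : (B.subgroupOf N).FiniteIndex)
    (S : Set G) (hS : Subgroup.closure S = B) :
    (∃ A : Subgroup G, (A : Set G) =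
        (B : Set G) ∪
          ⋃ f ∈ ((K : Set (G ⧸ N)) \ {1}),
            (fun b => g f * n f * b) '' (B : Set G)) ↔
      ((∀ f ∈ ((K : Set (G ⧸ N)) \ {1}), ∀ b ∈ S,
          (g f * n f)⁻¹ * b * (g f * n f) ∈ B) ∧
        (∀ f ∈ ((K : Set (G ⧸ N)) \ {1}), ∀ f' ∈ ((K : Set (G ⧸ N)) \ {1}),
          f * f' ≠ 1 →
          (g (f * f') * n (f * f'))⁻¹ * (g f * n f) * (g f' * n f') ∈ B) ∧
        (∀ f ∈ ((K : Set (G ⧸ N)) \ {1}),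
          g f * n f * (g f⁻¹ * n f⁻¹) ∈ B)) :=
  stmt14_general N g hg hg1 K n hn hn1 B hBN S hS
end

section
/- Let (a_n) and (b_n) be sequences of nonnegative reals whose Dirichlet series A(s) = Σ a_n n^{-s} and B(s) = Σ b_n n^{-s} have Euler factorizations agreeing at all but finitely many primes, in the sense that A(s) = ∏_p A_p(s), B(s) = ∏_p B_p(s) with A_p = B_p for p outside a finite set T, and every local factor has abscissa of convergence strictly less than those of A and B. Then A(s) and B(s) have the same abscissa of convergence. -/
/-- The abscissa of convergence (in `ℝ ∪ {±∞}`, i.e. `EReal`) of a Dirichlet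
series `Σ aₙ n^{-s}` with real coefficients. -/
noncomputable def dirAbscissa (a : ℕ → ℝ) : EReal :=
  sInf ((fun s : ℝ => (s : EReal)) ''
    {s : ℝ | Summable fun n : ℕ => a n * (n : ℝ) ^ (-s)})

/-- The abscissa of convergence of a local Euler factor `Σ_k L_k p^{-ks}`. -/
noncomputable def localAbscissa (p : ℕ) (L : ℕ → ℝ) : EReal :=
  sInf ((fun s : ℝ => (s : EReal)) ''
    {s : ℝ | Summable fun k : ℕ => L k * (p : ℝ) ^ (-((k : ℝ) * s))})

/-!
Suppose `A` converges at a real `s` lying beyond the local abscissae of `B` at the finitely many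
primes where the factors differ. Then every local factor of `B` converges at `s`, and the Euler
product of `B` at `s` is that of `A` with finitely many factors changed. The factors of `A` are
at least their constant term `1`, so none vanishes, and changing finitely many nonzero factors
preserves convergence of a product. Hence `B` converges at `s`, so the abscissa of `B` is at
most that of `A`; the reverse inequality is symmetric.
-/

theorem IsUpperSet.mem_of_sInf_coe_lt {S : Set ℝ} (hS : IsUpperSet S) {s : ℝ}
    (h : sInf ((fun s : ℝ => (s : EReal)) '' S) < s) : s ∈ S := by
  obtain ⟨_, ⟨s', hs', rfl⟩, hs's⟩ := sInf_lt_iff.mp h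
  exact hS (EReal.coe_lt_coe_iff.mp hs's).le hs'

theorem isUpperSet_summable_dirichlet {a : ℕ → ℝ} (ha : ∀ n, 0 ≤ a n) :
    IsUpperSet {s : ℝ | Summable fun n : ℕ => a n * (n : ℝ) ^ (-s)} := by
  intro s' s hss h
  -- the term `a 0 * 0 ^ (-s)` is `a 0` at `s = 0` and `0` otherwise, so it is dropped
  rw [Set.mem_ofPred_eq, ← summable_nat_add_iff 1] at h ⊢
  refine h.of_nonneg_of_le (fun n => mul_nonneg (ha _) (Real.rpow_nonneg (by positivity) _))
    fun n => mul_le_mul_of_nonneg_left ?_ (ha _)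
  exact Real.rpow_le_rpow_of_exponent_le (by simp) (neg_le_neg hss)

theorem isUpperSet_summable_eulerFactor {L : ℕ → ℝ} (hL : ∀ k, 0 ≤ L k) {x : ℝ} (hx : 1 ≤ x) :
    IsUpperSet {s : ℝ | Summable fun k : ℕ => L k * x ^ (-((k : ℝ) * s))} := by
  intro s' s hss h
  refine h.of_nonneg_of_le (fun k => mul_nonneg (hL _) (Real.rpow_nonneg (by linarith) _))
    fun k => mul_le_mul_of_nonneg_left ?_ (hL _)
  exact Real.rpow_le_rpow_of_exponent_le hx
    (neg_le_neg (mul_le_mul_of_nonneg_left hss (Nat.cast_nonneg k)))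

theorem summable_of_dirAbscissa_lt {a : ℕ → ℝ} (ha : ∀ n, 0 ≤ a n) {s : ℝ}
    (h : dirAbscissa a < s) : Summable fun n : ℕ => a n * (n : ℝ) ^ (-s) :=
  (isUpperSet_summable_dirichlet ha).mem_of_sInf_coe_lt h

theorem summable_of_localAbscissa_lt {p : ℕ} (hp : 1 ≤ p) {L : ℕ → ℝ} (hL : ∀ k, 0 ≤ L k)
    {s : ℝ} (h : localAbscissa p L < s) :
    Summable fun k : ℕ => L k * (p : ℝ) ^ (-((k : ℝ) * s)) :=
  (isUpperSet_summable_eulerFactor hL (by exact_mod_cast hp)).mem_of_sInf_coe_lt h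

theorem dirAbscissa_le_of_summable {a : ℕ → ℝ} {s : ℝ}
    (h : Summable fun n : ℕ => a n * (n : ℝ) ^ (-s)) : dirAbscissa a ≤ s :=
  sInf_le ⟨s, h, rfl⟩

theorem one_le_tsum_eulerFactor {L : ℕ → ℝ} (hL : ∀ k, 0 ≤ L k) (hL0 : L 0 = 1) {x s : ℝ}
    (hx : 0 ≤ x) (h : Summable fun k : ℕ => L k * x ^ (-((k : ℝ) * s))) :
    1 ≤ ∑' k : ℕ, L k * x ^ (-((k : ℝ) * s)) := by
  simpa [hL0] using h.le_tsum 0 fun k _ => mul_nonneg (hL k) (Real.rpow_nonneg hx _)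

theorem Multipliable.of_finite_ne {ι M : Type*} [CommGroupWithZero M] [TopologicalSpace M]
    [ContinuousMul M] {f g : ι → M} (hf : Multipliable f) (hf0 : ∀ i, f i ≠ 0)
    (hfg : {i | f i ≠ g i}.Finite) : Multipliable g := by
  have hquot : Multipliable fun i => g i / f i := by
    exact multipliable_of_hasFiniteMulSupport
      (hfg.subset fun i hi heq => hi (by simp only [← heq, div_self (hf0 i)]))
  simpa only [div_mul_cancel₀ _ (hf0 _)] using hquot.mul hf

def SummableIffEulerProduct (a : ℕ → ℝ) (L : ℕ → ℕ → ℝ) : Prop :=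
  ∀ s : ℝ,
    (Summable fun n : ℕ => a n * (n : ℝ) ^ (-s)) ↔
      ((∀ p : Nat.Primes,
          Summable fun k : ℕ => L p k * ((p : ℕ) : ℝ) ^ (-((k : ℝ) * s))) ∧
        Multipliable fun p : Nat.Primes =>
          ∑' k : ℕ, L p k * ((p : ℕ) : ℝ) ^ (-((k : ℝ) * s)))

section EulerFactorsEqOffFinite

variable {a b : ℕ → ℝ} {La Lb : ℕ → ℕ → ℝ}

theorem summable_dirichlet_of_eulerFactors_eq_off_finite
    (hA : SummableIffEulerProduct a La) (hB : SummableIffEulerProduct b Lb)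
    (hLa0 : ∀ p : Nat.Primes, La p 0 = 1) (hLa : ∀ (p : Nat.Primes) (k : ℕ), 0 ≤ La p k)
    (hfin : {p : Nat.Primes | La p ≠ Lb p}.Finite) {s : ℝ}
    (has : Summable fun n : ℕ => a n * (n : ℝ) ^ (-s))
    (hLbs : ∀ p : Nat.Primes, La p ≠ Lb p →
      Summable fun k : ℕ => Lb p k * ((p : ℕ) : ℝ) ^ (-((k : ℝ) * s))) :
    Summable fun n : ℕ => b n * (n : ℝ) ^ (-s) := by
  obtain ⟨hLas, hprod⟩ := (hA s).mp has
  refine (hB s).mpr ⟨fun p => ?_, hprod.of_finite_ne (fun p => ?_) (hfin.subset fun p hp => ?_)⟩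
  · by_cases h : La p = Lb p
    · exact h ▸ hLas p
    · exact hLbs p h
  · exact (one_pos.trans_le
      (one_le_tsum_eulerFactor (hLa p) (hLa0 p) (Nat.cast_nonneg _) (hLas p))).ne'
  · exact fun h => hp (by rw [h])

theorem dirAbscissa_le_of_eulerFactors_eq_off_finite (ha : ∀ n, 0 ≤ a n)
    (hA : SummableIffEulerProduct a La) (hB : SummableIffEulerProduct b Lb)
    (hLa0 : ∀ p : Nat.Primes, La p 0 = 1) (hLa : ∀ (p : Nat.Primes) (k : ℕ), 0 ≤ La p k)
    (hLb : ∀ (p : Nat.Primes) (k : ℕ), 0 ≤ Lb p k)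
    (hfin : {p : Nat.Primes | La p ≠ Lb p}.Finite)
    (hlocB : ∀ p : Nat.Primes, La p ≠ Lb p → localAbscissa p (Lb p) < dirAbscissa b) :
    dirAbscissa b ≤ dirAbscissa a := by
  by_contra! hab
  have hsup : dirAbscissa a ⊔ hfin.toFinset.sup (fun p => localAbscissa p (Lb p)) <
      dirAbscissa b :=
    sup_lt_iff.mpr ⟨hab, (Finset.sup_lt_iff (bot_le.trans_lt hab)).mpr
      fun p hp => hlocB p (hfin.mem_toFinset.mp hp)⟩
  obtain ⟨s, hs, hsb⟩ := EReal.exists_between_coe_real hsup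
  have hbs : Summable fun n : ℕ => b n * (n : ℝ) ^ (-s) :=
    summable_dirichlet_of_eulerFactors_eq_off_finite hA hB hLa0 hLa hfin
      (summable_of_dirAbscissa_lt ha (le_sup_left.trans_lt hs))
      fun p hp => summable_of_localAbscissa_lt p.2.one_lt.le (hLb p)
        ((Finset.le_sup (hfin.mem_toFinset.mpr hp)).trans_lt (le_sup_right.trans_lt hs))
  exact (dirAbscissa_le_of_summable hbs).not_gt hsb

end EulerFactorsEqOffFinite

theorem stmt18_general (a b : ℕ → ℝ) (ha : ∀ n, 0 ≤ a n) (hb : ∀ n, 0 ≤ b n)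
    (La Lb : ℕ → ℕ → ℝ)
    (hLa0 : ∀ p : Nat.Primes, La p 0 = 1) (hLb0 : ∀ p : Nat.Primes, Lb p 0 = 1)
    (hLa : ∀ (p : Nat.Primes) (k : ℕ), 0 ≤ La p k)
    (hLb : ∀ (p : Nat.Primes) (k : ℕ), 0 ≤ Lb p k)
    (T : Finset ℕ)
    (hagree : ∀ p : Nat.Primes, (p : ℕ) ∉ T → La p = Lb p)
    -- Euler factorization of `A`: convergence equivalence and equality of values
    (hEa : ∀ s : ℝ,
      (Summable fun n : ℕ => a n * (n : ℝ) ^ (-s)) ↔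
        ((∀ p : Nat.Primes,
            Summable fun k : ℕ => La p k * ((p : ℕ) : ℝ) ^ (-((k : ℝ) * s))) ∧
          Multipliable fun p : Nat.Primes =>
            ∑' k : ℕ, La p k * ((p : ℕ) : ℝ) ^ (-((k : ℝ) * s))))
    (hEb : ∀ s : ℝ,
      (Summable fun n : ℕ => b n * (n : ℝ) ^ (-s)) ↔
        ((∀ p : Nat.Primes,
            Summable fun k : ℕ => Lb p k * ((p : ℕ) : ℝ) ^ (-((k : ℝ) * s))) ∧
          Multipliable fun p : Nat.Primes =>
            ∑' k : ℕ, Lb p k * ((p : ℕ) : ℝ) ^ (-((k : ℝ) * s))))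
    -- each local factor converges strictly beyond the global abscissae
    (hlocA : ∀ p : Nat.Primes, localAbscissa p (La p) < dirAbscissa a)
    (hlocB : ∀ p : Nat.Primes, localAbscissa p (Lb p) < dirAbscissa b) :
    dirAbscissa a = dirAbscissa b := by
  have hfin : {p : Nat.Primes | La p ≠ Lb p}.Finite :=
    (T.finite_toSet.preimage Subtype.val_injective.injOn).subset
      fun p hp => by_contra fun hpT => hp (hagree p hpT)
  have hfin' : {p : Nat.Primes | Lb p ≠ La p}.Finite := by simpa only [ne_comm] using hfin
  exact le_antisymm
    (dirAbscissa_le_of_eulerFactors_eq_off_finite hb hEb hEa hLb0 hLb hLa hfin' fun p _ => hlocA p)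
    (dirAbscissa_le_of_eulerFactors_eq_off_finite ha hEa hEb hLa0 hLa hLb hfin fun p _ => hlocB p)

/-- If the Dirichlet series `A(s) = Σ aₙ n^{-s}` and `B(s) = Σ bₙ n^{-s}` with
nonnegative coefficients admit Euler factorizations `A = ∏_p A_p`, `B = ∏_p B_p`
whose local factors (nonnegative coefficients, constant term `1`) agree outside
a finite set `T` of primes, and every local factor has abscissa of convergence
strictly less than those of `A` and `B`, then `A` and `B` have the same abscissa
of convergence. -/
theorem stmt18 (a b : ℕ → ℝ) (ha : ∀ n, 0 ≤ a n) (hb : ∀ n, 0 ≤ b n)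
    (La Lb : ℕ → ℕ → ℝ)
    (hLa0 : ∀ p : Nat.Primes, La p 0 = 1) (hLb0 : ∀ p : Nat.Primes, Lb p 0 = 1)
    (hLa : ∀ (p : Nat.Primes) (k : ℕ), 0 ≤ La p k)
    (hLb : ∀ (p : Nat.Primes) (k : ℕ), 0 ≤ Lb p k)
    (T : Finset ℕ) (hT : ∀ p ∈ T, p.Prime)
    (hagree : ∀ p : Nat.Primes, (p : ℕ) ∉ T → La p = Lb p)
    -- Euler factorization of `A`: convergence equivalence and equality of values
    (hEa : ∀ s : ℝ,
      (Summable fun n : ℕ => a n * (n : ℝ) ^ (-s)) ↔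
        ((∀ p : Nat.Primes,
            Summable fun k : ℕ => La p k * ((p : ℕ) : ℝ) ^ (-((k : ℝ) * s))) ∧
          Multipliable fun p : Nat.Primes =>
            ∑' k : ℕ, La p k * ((p : ℕ) : ℝ) ^ (-((k : ℝ) * s))))
    (hEa' : ∀ s : ℝ, (Summable fun n : ℕ => a n * (n : ℝ) ^ (-s)) →
      (∑' n : ℕ, a n * (n : ℝ) ^ (-s)) =
        ∏' p : Nat.Primes,
          ∑' k : ℕ, La p k * ((p : ℕ) : ℝ) ^ (-((k : ℝ) * s)))
    (hEb : ∀ s : ℝ,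
      (Summable fun n : ℕ => b n * (n : ℝ) ^ (-s)) ↔
        ((∀ p : Nat.Primes,
            Summable fun k : ℕ => Lb p k * ((p : ℕ) : ℝ) ^ (-((k : ℝ) * s))) ∧
          Multipliable fun p : Nat.Primes =>
            ∑' k : ℕ, Lb p k * ((p : ℕ) : ℝ) ^ (-((k : ℝ) * s))))
    (hEb' : ∀ s : ℝ, (Summable fun n : ℕ => b n * (n : ℝ) ^ (-s)) →
      (∑' n : ℕ, b n * (n : ℝ) ^ (-s)) =
        ∏' p : Nat.Primes,
          ∑' k : ℕ, Lb p k * ((p : ℕ) : ℝ) ^ (-((k : ℝ) * s)))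
    -- each local factor converges strictly beyond the global abscissae
    (hlocA : ∀ p : Nat.Primes, localAbscissa p (La p) < dirAbscissa a)
    (hlocB : ∀ p : Nat.Primes, localAbscissa p (Lb p) < dirAbscissa b) :
    dirAbscissa a = dirAbscissa b :=
  stmt18_general a b ha hb La Lb hLa0 hLb0 hLa hLb T hagree hEa hEb hlocA hlocB
end

section
/- Let t ∈ Tr(h, ℤ_p) be upper triangular with nonzero diagonal entries, acting on ℤ_p^h, and let M(B) = {t ∈ Tr(h,ℤ_p) : rows of t generate the open subgroup B of ℤ_p^h}. Then M(B) is open in Tr(h,ℤ_p) and its Haar measure equals (1 - p^{-1})^h · ∏_{i=1}^h |t_ii|_p^i for any t ∈ M(B). -/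
open MeasureTheory
open scoped ENNReal

/-- The additive group `Tr(h, ℤ_p)` of upper triangular `h × h` matrices over
the `p`-adic integers. -/
def triMatrices (p h : ℕ) [Fact p.Prime] :
    AddSubgroup (Matrix (Fin h) (Fin h) ℤ_[p]) where
  carrier := {t | ∀ i j : Fin h, j < i → t i j = 0}
  zero_mem' := fun _ _ _ => rfl
  add_mem' := by
    intro a b ha hb i j hij
    simp [Matrix.add_apply, ha i j hij, hb i j hij]
  neg_mem' := by
    intro a ha i j hij
    simp [Matrix.neg_apply, ha i j hij]

/-!
Fix `t ∈ M(B)`. Since `B` is open it contains `p ^ m • ℤ_[p] ^ h`, so `p ^ m • 1 = g * t` for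
some `g`; hence `det t ≠ 0` and every `t i i ≠ 0`. An upper triangular `u` has row span `B` iff
its rows lie in `B` and `‖u i i‖ = ‖t i i‖` for all `i`: writing `u = g * t`, the norms of the
diagonals say that `det g` is a unit. So `M(B)` is the union of the `(p - 1) ^ h` cosets
`diag(a) * t + H`, `a ∈ {1, …, p - 1} ^ h`, of the subgroup `H` of matrices whose rows lie in `B`
and whose diagonal entries are divisible by `p * t i i`. Reducing each row modulo the triangular
basis of `B` shows that the matrices whose `i`-th row is `d + a • t i`, with digits
`d j < ‖t j j‖⁻¹` vanishing for `j < i` and `a < p`, represent `Tr(h, ℤ_p) ⧸ H` exactly once, so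
`[Tr : H] = p ^ h * ∏ ‖t j j‖ ^ (-(j + 1))`. Being closed of finite index, `H` is open, and
`μ H = [Tr : H]⁻¹`.
-/

namespace Matrix

variable {R m n : Type*}

abbrev rowSpan [Semiring R] (t : Matrix m n R) : Submodule R (n → R) :=
  Submodule.span R (Set.range fun i => t i)

theorem exists_mul_eq_of_forall_mem_rowSpan [Semiring R] [Fintype m] {t u : Matrix m n R}
    (hu : ∀ i, u i ∈ t.rowSpan) : ∃ g : Matrix m m R, g * t = u := by
  choose g hg using fun i => (Submodule.mem_span_range_iff_exists_fun R).mp (hu i)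
  refine ⟨Matrix.of g, ?_⟩
  ext i j
  simp [Matrix.mul_apply, ← hg i, Finset.sum_apply]

theorem mul_row_mem_rowSpan [Semiring R] [Fintype m] (g : Matrix m m R) (u : Matrix m n R) (i : m) :
    (g * u) i ∈ u.rowSpan :=
  (Submodule.mem_span_range_iff_exists_fun R).mpr
    ⟨g i, by ext j; simp [Matrix.mul_apply, Finset.sum_apply]⟩

namespace IsUpperTriangular

variable [Fintype m] [LinearOrder m] {t : Matrix m m R}

theorem sum_smul_row_apply [Semiring R] (ht : t.IsUpperTriangular) {c : m → R} {k : m}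
    (hc : ∀ j < k, c j = 0) : (∑ j, c j • t j) k = c k * t k k := by
  rw [Finset.sum_apply, Finset.sum_eq_single k]
  · rfl
  · intro j _ hjk
    rcases hjk.lt_or_gt with hlt | hgt
    · simp [hc j hlt]
    · simp [ht hgt]
  · simp

theorem exists_sum_smul_row_eq_of_mem_rowSpan [Semiring R] [NoZeroDivisors R]
    (ht : t.IsUpperTriangular) (hdiag : ∀ j, t j j ≠ 0) {x : m → R}
    (hx : x ∈ t.rowSpan) {k : m} (hxk : ∀ l < k, x l = 0) :
    ∃ c : m → R, (∀ j < k, c j = 0) ∧ ∑ j, c j • t j = x := by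
  obtain ⟨c, rfl⟩ := (Submodule.mem_span_range_iff_exists_fun R).mp hx
  refine ⟨c, fun j => ?_, rfl⟩
  induction j using WellFoundedLT.induction with
  | _ j ih =>
    intro hjk
    have h0 := hxk j hjk
    rw [ht.sum_smul_row_apply fun l hl => ih l hl (hl.trans hjk)] at h0
    exact (mul_eq_zero.mp h0).resolve_right (hdiag j)

theorem diag_dvd_of_mem_rowSpan [CommSemiring R] [NoZeroDivisors R]
    (ht : t.IsUpperTriangular) (hdiag : ∀ j, t j j ≠ 0) {x : m → R}
    (hx : x ∈ t.rowSpan) {k : m} (hxk : ∀ l < k, x l = 0) :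
    t k k ∣ x k := by
  obtain ⟨c, hc, rfl⟩ := ht.exists_sum_smul_row_eq_of_mem_rowSpan hdiag hx hxk
  exact Dvd.intro_left _ (ht.sum_smul_row_apply hc).symm

end IsUpperTriangular

end Matrix

namespace PadicInt

variable {p : ℕ} [Fact p.Prime]

theorem norm_le_of_dvd {a b : ℤ_[p]} (h : a ∣ b) : ‖b‖ ≤ ‖a‖ := by
  obtain ⟨c, rfl⟩ := h
  rw [norm_mul]
  exact mul_le_of_le_one_right (norm_nonneg a) (norm_le_one c)

theorem associated_pow_valuation {a : ℤ_[p]} (ha : a ≠ 0) :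
    Associated ((p : ℤ_[p]) ^ a.valuation) a :=
  ⟨unitCoeff ha, by rw [mul_comm, ← unitCoeff_spec ha]⟩

theorem natCast_eq_of_pow_dvd_sub {a b n : ℕ} (ha : a < p ^ n) (hb : b < p ^ n)
    (h : (p : ℤ_[p]) ^ n ∣ (a : ℤ_[p]) - b) : a = b := by
  rw [← Ideal.mem_span_singleton, ← ker_toZModPow, RingHom.mem_ker, map_sub, map_natCast,
    map_natCast, sub_eq_zero, ZMod.natCast_eq_natCast_iff'] at h
  rwa [Nat.mod_eq_of_lt ha, Nat.mod_eq_of_lt hb] at h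

theorem exists_lt_pow_valuation_dvd_sub {a : ℤ_[p]} (ha : a ≠ 0) (z : ℤ_[p]) :
    ∃ δ < p ^ a.valuation, a ∣ z - δ :=
  ⟨z.appr _, z.appr_lt _,
    (associated_pow_valuation ha).symm.dvd.trans (Ideal.mem_span_singleton.mp (z.appr_spec _))⟩

theorem pow_dvd_sub_appr (z : ℤ_[p]) (n : ℕ) : (p : ℤ_[p]) ^ n ∣ z - z.appr n :=
  Ideal.mem_span_singleton.mp (z.appr_spec n)

theorem exists_pow_smul_mem_of_isOpen {ι : Type*} [Fintype ι] {B : Submodule ℤ_[p] (ι → ℤ_[p])}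
    (hB : IsOpen (B : Set (ι → ℤ_[p]))) : ∃ m : ℕ, ∀ v, (p : ℤ_[p]) ^ m • v ∈ B := by
  obtain ⟨ε, hε, hball⟩ := Metric.isOpen_iff.mp hB 0 B.zero_mem
  have hp : ‖(p : ℤ_[p])‖ < 1 := by
    rw [norm_p]; exact inv_lt_one_of_one_lt₀ (by exact_mod_cast (Fact.out : p.Prime).one_lt)
  obtain ⟨m, hm⟩ := exists_pow_lt_of_lt_one hε hp
  refine ⟨m, fun v => hball (mem_ball_zero_iff.mpr ?_)⟩
  calc ‖(p : ℤ_[p]) ^ m • v‖ ≤ ‖(p : ℤ_[p]) ^ m‖ * ‖v‖ := norm_smul_le _ _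
    _ ≤ ‖(p : ℤ_[p])‖ ^ m := by
      rw [norm_pow]
      exact mul_le_of_le_one_right (by positivity)
        ((pi_norm_le_iff_of_nonneg zero_le_one).mpr fun i => norm_le_one _)
    _ < ε := hm

theorem norm_natCast_eq_one {a : ℕ} (h0 : a ≠ 0) (hap : a < p) : ‖(a : ℤ_[p])‖ = 1 := by
  refine le_antisymm (norm_le_one _) (not_lt.mp fun hlt => h0 ?_)
  refine natCast_eq_of_pow_dvd_sub (n := 1) (by simpa) (by simp [(Fact.out : p.Prime).pos]) ?_
  simpa using (norm_lt_one_iff_dvd _).mp hlt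

theorem norm_natCast_mul_add_of_dvd {a : ℕ} (h0 : a ≠ 0) (hap : a < p) {b z : ℤ_[p]}
    (hb : b ≠ 0) (hz : (p : ℤ_[p]) * b ∣ z) : ‖(a : ℤ_[p]) * b + z‖ = ‖b‖ := by
  have hab : ‖(a : ℤ_[p]) * b‖ = ‖b‖ := by rw [norm_mul, norm_natCast_eq_one h0 hap, one_mul]
  have hlt : ‖z‖ < ‖b‖ := by
    refine (norm_le_of_dvd hz).trans_lt ?_
    rw [norm_mul, norm_p]
    exact mul_lt_of_lt_one_left (norm_pos_iff.mpr hb)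
      (inv_lt_one_of_one_lt₀ (by exact_mod_cast (Fact.out : p.Prime).one_lt))
  rw [IsUltrametricDist.norm_add_eq_max_of_norm_ne_norm (hab ▸ hlt.ne'), hab, max_eq_left hlt.le]

theorem isClosed_setOf_dvd (a : ℤ_[p]) : IsClosed {z : ℤ_[p] | a ∣ z} := by
  have : {z : ℤ_[p] | a ∣ z} = (Ideal.span {a} : Set ℤ_[p]) := by
    ext z; simp [Ideal.mem_span_singleton]
  rw [this]
  exact (Ideal.isCompact_of_fg (IsNoetherian.noetherian _)).isClosed

end PadicInt

section Lattice

open Matrix PadicInt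

variable {p : ℕ} [Fact p.Prime] {h : ℕ} {T u : Matrix (Fin h) (Fin h) ℤ_[p]}

theorem diag_ne_zero_of_isOpen_rowSpan (hT : T.IsUpperTriangular)
    (hopen : IsOpen (T.rowSpan : Set (Fin h → ℤ_[p]))) (k : Fin h) : T k k ≠ 0 := by
  obtain ⟨m, hm⟩ := exists_pow_smul_mem_of_isOpen hopen
  obtain ⟨g, hg⟩ := exists_mul_eq_of_forall_mem_rowSpan (t := T)
    (u := (p : ℤ_[p]) ^ m • (1 : Matrix (Fin h) (Fin h) ℤ_[p])) fun i => hm _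
  have hdet : g.det * ∏ i, T i i = ((p : ℤ_[p]) ^ m) ^ h := by
    rw [← det_of_isUpperTriangular hT, ← det_mul, hg, det_smul, det_one, mul_one,
      Fintype.card_fin]
  have hp : (p : ℤ_[p]) ≠ 0 := Nat.cast_ne_zero.mpr (Fact.out : p.Prime).ne_zero
  have hprod : ∏ i, T i i ≠ 0 := right_ne_zero_of_mul (hdet ▸ pow_ne_zero _ (pow_ne_zero _ hp))
  exact Finset.prod_ne_zero_iff.mp hprod k (Finset.mem_univ k)

theorem rowSpan_eq_rowSpan_iff (hT : T.IsUpperTriangular)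
    (hopen : IsOpen (T.rowSpan : Set (Fin h → ℤ_[p])))
    (hu : u.IsUpperTriangular) :
    u.rowSpan = T.rowSpan ↔ ∀ i, u i ∈ T.rowSpan ∧ ‖u i i‖ = ‖T i i‖ := by
  have hdiagT := diag_ne_zero_of_isOpen_rowSpan hT hopen
  constructor
  · intro hspan i
    have hdiagu := diag_ne_zero_of_isOpen_rowSpan hu (hspan ▸ hopen)
    have huT : u i ∈ T.rowSpan := hspan ▸ Submodule.subset_span ⟨i, rfl⟩
    have hTu : T i ∈ u.rowSpan := hspan ▸ Submodule.subset_span ⟨i, rfl⟩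
    exact ⟨huT, le_antisymm
      (norm_le_of_dvd (hT.diag_dvd_of_mem_rowSpan hdiagT huT fun l hl => hu hl))
      (norm_le_of_dvd (hu.diag_dvd_of_mem_rowSpan hdiagu hTu fun l hl => hT hl))⟩
  · intro hrows
    refine le_antisymm (Submodule.span_le.mpr (Set.range_subset_iff.mpr fun i => (hrows i).1)) ?_
    obtain ⟨g, hg⟩ := exists_mul_eq_of_forall_mem_rowSpan fun i => (hrows i).1
    have hdetT : T.det ≠ 0 := by
      rw [det_of_isUpperTriangular hT]
      exact Finset.prod_ne_zero_iff.mpr fun i _ => hdiagT i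
    have hdet_norm : ‖u.det‖ = ‖T.det‖ := by
      simp only [det_of_isUpperTriangular hT, det_of_isUpperTriangular hu, norm_prod,
        fun i => (hrows i).2]
    have hg_unit : IsUnit g.det := by
      rw [isUnit_iff]
      have := congrArg (‖det ·‖) hg
      simp only [det_mul, norm_mul, hdet_norm] at this
      exact (mul_eq_right₀ (norm_ne_zero_iff.mpr hdetT)).mp this
    rw [Submodule.span_le]
    rintro _ ⟨i, rfl⟩
    rw [← nonsing_inv_mul_cancel_left (A := g) T hg_unit, hg]
    exact mul_row_mem_rowSpan _ _ i

theorem exists_digits_sub_mem_rowSpan (hT : T.IsUpperTriangular) (hdiag : ∀ j, T j j ≠ 0)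
    (x : Fin h → ℤ_[p]) (i : ℕ) (hx : ∀ l : Fin h, (l : ℕ) < i → x l = 0) :
    ∃ d : Fin h → ℕ, (∀ j, d j < p ^ (T j j).valuation) ∧
      (∀ j : Fin h, (j : ℕ) < i → d j = 0) ∧ x - (fun j => (d j : ℤ_[p])) ∈ T.rowSpan := by
  -- Downward induction on `i`: the digit `δ` and a multiple of row `i` clear coordinate `i`.
  obtain ⟨n, hn⟩ : ∃ n, h - i = n := ⟨_, rfl⟩
  induction n generalizing i x with
  | zero =>
    have hx0 : x = 0 := funext fun l => hx l (by omega)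
    refine ⟨0, fun j => pow_pos (Fact.out : p.Prime).pos _, fun _ _ => rfl, ?_⟩
    convert T.rowSpan.zero_mem
    ext
    simp [hx0]
  | succ n ih =>
    set ι : Fin h := ⟨i, by omega⟩
    obtain ⟨δ, hδ, q, hq⟩ := exists_lt_pow_valuation_dvd_sub (hdiag ι) (x ι)
    have hy : ∀ l : Fin h, (l : ℕ) < i + 1 →
        (x - Pi.single ι (δ : ℤ_[p]) - q • T ι : Fin h → ℤ_[p]) l = 0 := by
      intro l hl
      rcases (Nat.lt_succ_iff.mp hl).lt_or_eq with hlt | heq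
      · have hlι : l < ι := hlt
        simpa [hx l hlt, hlι.ne] using Or.inr (hT hlι)
      · rw [show l = ι from Fin.ext heq]
        simp only [Pi.sub_apply, Pi.single_eq_same, Pi.smul_apply, smul_eq_mul]
        linear_combination hq
    obtain ⟨d, hd, hdi, hmem⟩ := ih _ (i + 1) hy (by omega)
    have hdι : d ι = 0 := hdi ι (by simp [ι])
    refine ⟨Function.update d ι δ, fun j => ?_, fun j hj => ?_, ?_⟩
    · rcases eq_or_ne j ι with rfl | hj
      · simpa using hδ
      · simpa [hj] using hd j
    · have hjι : j ≠ ι := fun e => by simp [e, ι] at hj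
      simp [hjι, hdi j (by omega)]
    · have hsplit : x - (fun j => ((Function.update d ι δ j : ℕ) : ℤ_[p])) =
          (x - Pi.single ι (δ : ℤ_[p]) - q • T ι - fun j => (d j : ℤ_[p])) + q • T ι := by
        ext j
        rcases eq_or_ne j ι with rfl | hj
        · simp [hdι]
        · simp [hj]
          ring
      rw [hsplit]
      exact add_mem hmem (Submodule.smul_mem _ _ (Submodule.subset_span ⟨ι, rfl⟩))

theorem digits_eq_of_sub_mem_rowSpan (hT : T.IsUpperTriangular) (hdiag : ∀ j, T j j ≠ 0)
    {d d' : Fin h → ℕ} (hd : ∀ j, d j < p ^ (T j j).valuation)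
    (hd' : ∀ j, d' j < p ^ (T j j).valuation)
    (hmem : (fun j => (d j : ℤ_[p]) - d' j) ∈ T.rowSpan) : d = d' := by
  obtain ⟨c, hc⟩ := (Submodule.mem_span_range_iff_exists_fun _).mp hmem
  suffices ∀ j, c j = 0 ∧ d j = d' j from funext fun j => (this j).2
  intro j
  induction j using WellFoundedLT.induction with
  | _ j ih =>
    have hcj : (d j : ℤ_[p]) - d' j = c j * T j j := by
      rw [← hT.sum_smul_row_apply fun l hl => (ih l hl).1, hc]
    have hdj : d j = d' j := natCast_eq_of_pow_dvd_sub (hd j) (hd' j)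
      ((associated_pow_valuation (hdiag j)).dvd.trans (hcj ▸ dvd_mul_left _ _))
    refine ⟨?_, hdj⟩
    rw [hdj, sub_self, eq_comm, mul_eq_zero] at hcj
    exact hcj.resolve_right (hdiag j)

variable (T) in
def cosetSubgroup : AddSubgroup (Matrix (Fin h) (Fin h) ℤ_[p]) where
  carrier := {x | ∀ i, x i ∈ T.rowSpan ∧ (p : ℤ_[p]) * T i i ∣ x i i}
  zero_mem' _ := ⟨zero_mem _, dvd_zero _⟩
  add_mem' hx hy i := ⟨add_mem (hx i).1 (hy i).1, dvd_add (hx i).2 (hy i).2⟩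
  neg_mem' hx i := ⟨neg_mem (hx i).1, dvd_neg.mpr (hx i).2⟩

theorem sub_natCast_smul_row_mem {y : Fin h → ℤ_[p]} (hy : y ∈ T.rowSpan) {i : Fin h}
    {c : ℤ_[p]} (hc : y i = c * T i i) {a : ℕ} (ha : (p : ℤ_[p]) ∣ c - a) :
    y - (a : ℤ_[p]) • T i ∈ T.rowSpan ∧ (p : ℤ_[p]) * T i i ∣ (y - (a : ℤ_[p]) • T i) i := by
  refine ⟨sub_mem hy (Submodule.smul_mem _ _ (Submodule.subset_span ⟨i, rfl⟩)), ?_⟩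
  obtain ⟨e, he⟩ := ha
  refine ⟨e, ?_⟩
  simp only [Pi.sub_apply, Pi.smul_apply, smul_eq_mul, hc]
  linear_combination T i i * he

variable (T) in
noncomputable def digitBound (i j : Fin h) : ℕ := if i ≤ j then p ^ (T j j).valuation else 1

instance (i j : Fin h) : NeZero (digitBound T i j) :=
  ⟨by unfold digitBound; split_ifs <;> simp [(Fact.out : p.Prime).ne_zero]⟩

theorem digitBound_le (i j : Fin h) : digitBound T i j ≤ p ^ (T j j).valuation := by
  unfold digitBound
  split_ifs
  exacts [le_rfl, Nat.one_le_pow _ _ (Fact.out : p.Prime).pos]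

variable (T) in
abbrev CosetDigits : Type := ((i j : Fin h) → Fin (digitBound T i j)) × (Fin h → Fin p)

variable (T) in
noncomputable def cosetRep (w : CosetDigits T) : Matrix (Fin h) (Fin h) ℤ_[p] :=
  Matrix.of fun i j => ((w.1 i j : ℕ) : ℤ_[p]) + ((w.2 i : ℕ) : ℤ_[p]) * T i j

theorem cosetRep_isUpperTriangular (hT : T.IsUpperTriangular) (w : CosetDigits T) :
    (cosetRep T w).IsUpperTriangular := by
  intro i j hji
  have hw := (w.1 i j).isLt
  simp only [digitBound, if_neg (not_le.mpr (show j < i from hji))] at hw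
  simp [cosetRep, Nat.lt_one_iff.mp hw, hT hji]

theorem card_cosetDigits : Fintype.card (CosetDigits T) =
    p ^ h * ∏ j : Fin h, (p ^ (T j j).valuation) ^ ((j : ℕ) + 1) := by
  rw [Fintype.card_prod, mul_comm, Fintype.card_fun, Fintype.card_fin, Fintype.card_fin]
  congr 1
  simp only [Fintype.card_pi, Fintype.card_fin]
  rw [Finset.prod_comm]
  refine Finset.prod_congr rfl fun j _ => ?_
  simp [digitBound, Finset.prod_ite, Finset.prod_const, Finset.filter_ge_eq_Iic]

theorem exists_sub_cosetRep_mem (hT : T.IsUpperTriangular) (hdiag : ∀ j, T j j ≠ 0)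
    {x : Matrix (Fin h) (Fin h) ℤ_[p]} (hx : x.IsUpperTriangular) :
    ∃ w : CosetDigits T, x - cosetRep T w ∈ cosetSubgroup T := by
  choose d hd hd0 hmem using fun i : Fin h =>
    exists_digits_sub_mem_rowSpan hT hdiag (x i) i fun l hl => hx hl
  choose c hc using fun i : Fin h =>
    hT.diag_dvd_of_mem_rowSpan hdiag (hmem i) (k := i) fun l hl => by simp [hx hl, hd0 i l hl]
  obtain ⟨w, hw₁, hw₂⟩ : ∃ w : CosetDigits T,
      (∀ i j, (w.1 i j : ℕ) = d i j) ∧ ∀ i, (w.2 i : ℕ) = (c i).appr 1 := by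
    refine ⟨(fun i j => ⟨d i j, ?_⟩, fun i => ⟨(c i).appr 1, ?_⟩), fun _ _ => rfl, fun _ => rfl⟩
    · unfold digitBound
      split_ifs with hij
      · exact hd i j
      · simp [hd0 i j (not_le.mp hij)]
    · simpa using appr_lt (c i) 1
  refine ⟨w, fun i => ?_⟩
  have hrow : (x - cosetRep T w) i =
      (x i - fun j => (d i j : ℤ_[p])) - ((c i).appr 1 : ℤ_[p]) • T i := by
    ext j; simp [cosetRep, hw₁, hw₂]; ring
  rw [hrow]
  exact sub_natCast_smul_row_mem (hmem i) (by rw [hc i, mul_comm])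
    (by simpa using pow_dvd_sub_appr (c i) 1)

theorem eq_of_cosetRep_sub_cosetRep_mem (hT : T.IsUpperTriangular) (hdiag : ∀ j, T j j ≠ 0)
    {w w' : CosetDigits T} (hmem : cosetRep T w - cosetRep T w' ∈ cosetSubgroup T) : w = w' := by
  have hrow : ∀ i, (fun j => (w.1 i j : ℕ)) = (fun j => (w'.1 i j : ℕ)) ∧
      (w.2 i : ℕ) = w'.2 i := by
    intro i
    obtain ⟨hspan, hdvd⟩ := hmem i
    set a : ℤ_[p] := ((w.2 i : ℕ) : ℤ_[p]) - (w'.2 i : ℕ)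
    have hrowi : (cosetRep T w - cosetRep T w') i =
        (fun j => ((w.1 i j : ℕ) : ℤ_[p]) - (w'.1 i j : ℕ)) + a • T i := by
      ext j; simp [cosetRep, a]; ring
    have hdig : (fun j => (w.1 i j : ℕ)) = (fun j => (w'.1 i j : ℕ)) := by
      refine digits_eq_of_sub_mem_rowSpan hT hdiag
        (fun j => (w.1 i j).isLt.trans_le (digitBound_le i j))
        (fun j => (w'.1 i j).isLt.trans_le (digitBound_le i j)) ?_
      have := sub_mem hspan (Submodule.smul_mem _ a (Submodule.subset_span ⟨i, rfl⟩))
      rwa [hrowi, add_sub_cancel_right] at this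
    refine ⟨hdig, natCast_eq_of_pow_dvd_sub (n := 1) (by rw [pow_one]; exact (w.2 i).isLt)
      (by rw [pow_one]; exact (w'.2 i).isLt) ?_⟩
    have hii : (cosetRep T w - cosetRep T w') i i = a * T i i := by
      rw [hrowi]; simp [congrFun hdig i]
    rw [hii] at hdvd
    simpa using (mul_dvd_mul_iff_right (hdiag i)).mp hdvd
  exact Prod.ext (funext fun i => funext fun j => Fin.ext (congrFun (hrow i).1 j))
    (funext fun i => Fin.ext (hrow i).2)

theorem cosetRep_zero_apply (a : Fin h → Fin p) (i : Fin h) :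
    cosetRep T (0, a) i = ((a i : ℕ) : ℤ_[p]) • T i := by
  ext j; simp [cosetRep]

theorem rowSpan_eq_iff_exists_sub_cosetRep_mem (hT : T.IsUpperTriangular)
    (hopen : IsOpen (T.rowSpan : Set (Fin h → ℤ_[p])))
    {u : Matrix (Fin h) (Fin h) ℤ_[p]} (hu : u.IsUpperTriangular) :
    u.rowSpan = T.rowSpan ↔
      ∃ a : Fin h → {v : Fin p // v ≠ 0}, u - cosetRep T (0, fun i => a i) ∈ cosetSubgroup T := by
  have hdiag := diag_ne_zero_of_isOpen_rowSpan hT hopen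
  rw [rowSpan_eq_rowSpan_iff hT hopen hu]
  constructor
  · intro hrows
    choose c hc using fun i : Fin h =>
      hT.diag_dvd_of_mem_rowSpan hdiag (hrows i).1 (k := i) fun l hl => hu hl
    have hc_norm : ∀ i, ‖c i‖ = 1 := fun i => by
      have := (hrows i).2
      rwa [hc i, norm_mul, mul_eq_left₀ (norm_ne_zero_iff.mpr (hdiag i))] at this
    have happr : ∀ i, (c i).appr 1 ≠ 0 := fun i h0 => by
      have := (norm_lt_one_iff_dvd (c i)).mpr (by simpa [h0] using pow_dvd_sub_appr (c i) 1)
      exact this.ne (hc_norm i)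
    refine ⟨fun i => ⟨⟨(c i).appr 1, by simpa using appr_lt (c i) 1⟩,
      fun h0 => happr i (congrArg Fin.val h0)⟩, fun i => ?_⟩
    rw [show (u - cosetRep T _) i = u i - cosetRep T _ i from rfl, cosetRep_zero_apply]
    exact sub_natCast_smul_row_mem (hrows i).1 (by rw [hc i, mul_comm])
      (by simpa using pow_dvd_sub_appr (c i) 1)
  · rintro ⟨a, ha⟩ i
    obtain ⟨hz, hzdvd⟩ := ha i
    have hui : u i = (u - cosetRep T (0, fun i => a i)) i + ((a i : ℕ) : ℤ_[p]) • T i := by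
      rw [show (u - cosetRep T _) i = u i - cosetRep T _ i from rfl, cosetRep_zero_apply,
        sub_add_cancel]
    refine ⟨hui ▸ add_mem hz (Submodule.smul_mem _ _ (Submodule.subset_span ⟨i, rfl⟩)), ?_⟩
    rw [congrFun hui i, Pi.add_apply, Pi.smul_apply, smul_eq_mul, add_comm,
      norm_natCast_mul_add_of_dvd (fun h0 => (a i).2 (Fin.ext h0)) (a i).1.isLt (hdiag i) hzdvd]

theorem isClosed_cosetSubgroup (hclosed : IsClosed (T.rowSpan : Set (Fin h → ℤ_[p]))) :
    IsClosed (cosetSubgroup T : Set (Matrix (Fin h) (Fin h) ℤ_[p])) := by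
  have hset : (cosetSubgroup T : Set (Matrix (Fin h) (Fin h) ℤ_[p])) =
      ⋂ i, {x | x i ∈ T.rowSpan} ∩ {x | (p : ℤ_[p]) * T i i ∣ x i i} := by
    ext x; simp [cosetSubgroup, forall_and]
  rw [hset]
  exact isClosed_iInter fun i =>
    (hclosed.preimage (continuous_pi fun j => continuous_id.matrix_elem i j)).inter
      ((isClosed_setOf_dvd _).preimage (continuous_id.matrix_elem i i))

end Lattice

section Haar

open Matrix PadicInt
open scoped Pointwise

variable {p : ℕ} [Fact p.Prime] {h : ℕ}

theorem mem_triMatrices_iff {t : Matrix (Fin h) (Fin h) ℤ_[p]} :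
    t ∈ triMatrices p h ↔ t.IsUpperTriangular :=
  ⟨fun ht _ _ hij => ht _ _ hij, fun ht _ _ hij => ht hij⟩

variable {T : Matrix (Fin h) (Fin h) ℤ_[p]}

noncomputable def cosetRepTr (hT : T ∈ triMatrices p h) (w : CosetDigits T) : triMatrices p h :=
  ⟨cosetRep T w, mem_triMatrices_iff.mpr (cosetRep_isUpperTriangular (mem_triMatrices_iff.mp hT) w)⟩

theorem mem_cosetRepTr_vadd_iff (hT : T ∈ triMatrices p h) {w : CosetDigits T}
    {u : triMatrices p h} :
    u ∈ cosetRepTr hT w +ᵥ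
        ((cosetSubgroup T).addSubgroupOf (triMatrices p h) : Set (triMatrices p h)) ↔
      (u : Matrix (Fin h) (Fin h) ℤ_[p]) - cosetRep T w ∈ cosetSubgroup T := by
  rw [mem_leftAddCoset_iff, SetLike.mem_coe, AddSubgroup.mem_addSubgroupOf, neg_add_eq_sub]
  rfl

theorem index_cosetSubgroup_addSubgroupOf (hT : T ∈ triMatrices p h)
    (hdiag : ∀ j, T j j ≠ 0) :
    ((cosetSubgroup T).addSubgroupOf (triMatrices p h)).index = Fintype.card (CosetDigits T) := by
  rw [AddSubgroup.index_eq_card, ← Nat.card_eq_fintype_card]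
  refine (Nat.card_congr (Equiv.ofBijective (fun w => (cosetRepTr hT w : _ ⧸ _)) ⟨?_, ?_⟩)).symm
  · intro w w' hww'
    rw [QuotientAddGroup.eq, neg_add_eq_sub, AddSubgroup.mem_addSubgroupOf] at hww'
    exact (eq_of_cosetRep_sub_cosetRep_mem (mem_triMatrices_iff.mp hT) hdiag hww').symm
  · rintro ⟨u⟩
    obtain ⟨w, hw⟩ := exists_sub_cosetRep_mem (mem_triMatrices_iff.mp hT) hdiag
      (mem_triMatrices_iff.mp u.2)
    exact ⟨w, QuotientAddGroup.eq.mpr (by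
      rw [neg_add_eq_sub, AddSubgroup.mem_addSubgroupOf]; exact hw)⟩

theorem isClosed_cosetSubgroup_addSubgroupOf
    (hopen : IsOpen (T.rowSpan : Set (Fin h → ℤ_[p]))) :
    IsClosed ((cosetSubgroup T).addSubgroupOf (triMatrices p h) : Set (triMatrices p h)) := by
  rw [AddSubgroup.coe_addSubgroupOf]
  exact (isClosed_cosetSubgroup (T.rowSpan.toAddSubgroup.isClosed_of_isOpen hopen)).preimage
    continuous_subtype_val

theorem finiteIndex_cosetSubgroup_addSubgroupOf (hT : T ∈ triMatrices p h)
    (hopen : IsOpen (T.rowSpan : Set (Fin h → ℤ_[p]))) :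
    ((cosetSubgroup T).addSubgroupOf (triMatrices p h)).FiniteIndex :=
  ⟨by
    rw [index_cosetSubgroup_addSubgroupOf hT
      (diag_ne_zero_of_isOpen_rowSpan (mem_triMatrices_iff.mp hT) hopen)]
    exact Fintype.card_ne_zero⟩

theorem setOf_rowSpan_eq_eq_iUnion (hT : T ∈ triMatrices p h)
    (hopen : IsOpen (T.rowSpan : Set (Fin h → ℤ_[p]))) :
    {u : triMatrices p h | (u : Matrix (Fin h) (Fin h) ℤ_[p]).rowSpan = T.rowSpan} =
      ⋃ a : Fin h → {v : Fin p // v ≠ 0}, cosetRepTr hT (0, fun i => a i) +ᵥ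
        ((cosetSubgroup T).addSubgroupOf (triMatrices p h) : Set (triMatrices p h)) := by
  ext u
  simp only [Set.mem_ofPred_eq, Set.mem_iUnion, mem_cosetRepTr_vadd_iff]
  exact rowSpan_eq_iff_exists_sub_cosetRep_mem (mem_triMatrices_iff.mp hT) hopen
    (mem_triMatrices_iff.mp u.2)

theorem isOpen_setOf_rowSpan_eq (hT : T ∈ triMatrices p h)
    (hopen : IsOpen (T.rowSpan : Set (Fin h → ℤ_[p]))) :
    IsOpen {u : triMatrices p h | (u : Matrix (Fin h) (Fin h) ℤ_[p]).rowSpan = T.rowSpan} := by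
  have := finiteIndex_cosetSubgroup_addSubgroupOf hT hopen
  have hH := AddSubgroup.isOpen_of_isClosed_of_finiteIndex _
    (isClosed_cosetSubgroup_addSubgroupOf hopen)
  rw [setOf_rowSpan_eq_eq_iUnion hT hopen]
  exact isOpen_iUnion fun a => hH.vadd _

theorem card_fun_subtype_ne_zero :
    Fintype.card (Fin h → {v : Fin p // v ≠ 0}) = (p - 1) ^ h := by
  simp [Fintype.card_subtype_compl]

theorem measure_setOf_rowSpan_eq [MeasurableSpace (triMatrices p h)]
    [BorelSpace (triMatrices p h)] (μ : Measure (triMatrices p h)) [μ.IsAddHaarMeasure]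
    (hμ : μ Set.univ = 1) (hT : T ∈ triMatrices p h)
    (hopen : IsOpen (T.rowSpan : Set (Fin h → ℤ_[p]))) :
    μ {u : triMatrices p h | (u : Matrix (Fin h) (Fin h) ℤ_[p]).rowSpan = T.rowSpan} =
      ((p - 1) ^ h : ℕ) / (Fintype.card (CosetDigits T) : ℝ≥0∞) := by
  have hTri := mem_triMatrices_iff.mp hT
  have hdiag := diag_ne_zero_of_isOpen_rowSpan hTri hopen
  have := finiteIndex_cosetSubgroup_addSubgroupOf hT hopen
  set H := (cosetSubgroup T).addSubgroupOf (triMatrices p h)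
  have hmeas : MeasurableSet (H : Set (triMatrices p h)) :=
    (isClosed_cosetSubgroup_addSubgroupOf hopen).measurableSet
  have hμH : μ H = (Fintype.card (CosetDigits T) : ℝ≥0∞)⁻¹ := by
    have := H.index_mul_measure hmeas μ
    rw [hμ, index_cosetSubgroup_addSubgroupOf hT hdiag] at this
    exact ENNReal.eq_inv_of_mul_eq_one_left ((mul_comm _ _).trans this)
  have hdisj : Pairwise (Function.onFun Disjoint fun a : Fin h → {v : Fin p // v ≠ 0} =>
      cosetRepTr hT (0, fun i => a i) +ᵥ (H : Set (triMatrices p h))) := by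
    intro a a' hne
    refine Set.disjoint_left.mpr fun u hu hu' => hne ?_
    rw [mem_cosetRepTr_vadd_iff] at hu hu'
    have := eq_of_cosetRep_sub_cosetRep_mem hTri hdiag (by simpa using sub_mem hu' hu)
    exact funext fun i => Subtype.ext (congrFun (congrArg Prod.snd this) i)
  rw [setOf_rowSpan_eq_eq_iUnion hT hopen, measure_iUnion hdisj fun a => hmeas.const_vadd _,
    tsum_fintype]
  simp only [measure_vadd, hμH, Finset.sum_const, Finset.card_univ, card_fun_subtype_ne_zero,
    nsmul_eq_mul, div_eq_mul_inv, Nat.cast_pow]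

theorem ofReal_mul_prod_norm_pow_eq (hdiag : ∀ i, T i i ≠ 0) :
    ENNReal.ofReal ((1 - (p : ℝ)⁻¹) ^ h * ∏ i : Fin h, ‖T i i‖ ^ ((i : ℕ) + 1)) =
      ((p - 1) ^ h : ℕ) / (Fintype.card (CosetDigits T) : ℝ≥0∞) := by
  have hp : (p : ℝ) ≠ 0 := by exact_mod_cast (Fact.out : p.Prime).ne_zero
  have hnorm : ∀ i, ‖T i i‖ = ((p : ℝ) ^ (T i i).valuation)⁻¹ := fun i => by
    rw [norm_eq_zpow_neg_valuation (hdiag i), _root_.zpow_neg, zpow_natCast]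
  have hreal : (1 - (p : ℝ)⁻¹) ^ h * ∏ i : Fin h, ‖T i i‖ ^ ((i : ℕ) + 1) =
      (((p - 1) ^ h : ℕ) : ℝ) / (Fintype.card (CosetDigits T) : ℝ) := by
    rw [card_cosetDigits]
    simp only [hnorm, inv_pow, Finset.prod_inv_distrib]
    push_cast [Nat.cast_sub (Fact.out : p.Prime).one_le]
    field_simp
    rw [← mul_pow, div_mul_cancel₀ _ (by positivity)]
  rw [hreal, ENNReal.ofReal_div_of_pos (by positivity), ENNReal.ofReal_natCast,
    ENNReal.ofReal_natCast]

end Haar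

/-- For an open subgroup `B` of `ℤ_p^h`, the set `M(B)` of upper triangular
matrices whose rows generate `B` (as a `ℤ_p`-module) is open in `Tr(h, ℤ_p)`,
and its normalized Haar measure equals `(1 - p⁻¹)^h · ∏ᵢ |t_ii|_p^i` for any
`t ∈ M(B)` (rows and diagonal indexed by `i = 1, …, h`). -/
theorem stmt19 (p h : ℕ) [Fact p.Prime]
    [MeasurableSpace ↥(triMatrices p h)] [BorelSpace ↥(triMatrices p h)]
    (μ : Measure ↥(triMatrices p h)) [μ.IsAddHaarMeasure] (hμ : μ Set.univ = 1)
    (B : Submodule ℤ_[p] (Fin h → ℤ_[p])) (hB : IsOpen (B : Set (Fin h → ℤ_[p]))) :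
    IsOpen {t : ↥(triMatrices p h) |
        Submodule.span ℤ_[p] (Set.range fun i : Fin h => (t : Matrix (Fin h) (Fin h) ℤ_[p]) i) = B} ∧
      ∀ t : ↥(triMatrices p h),
        Submodule.span ℤ_[p]
            (Set.range fun i : Fin h => (t : Matrix (Fin h) (Fin h) ℤ_[p]) i) = B →
        μ {u : ↥(triMatrices p h) |
            Submodule.span ℤ_[p]
              (Set.range fun i : Fin h => (u : Matrix (Fin h) (Fin h) ℤ_[p]) i) = B} =
          ENNReal.ofReal ((1 - (p : ℝ)⁻¹) ^ h *
            ∏ i : Fin h,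
              ‖(t : Matrix (Fin h) (Fin h) ℤ_[p]) i i‖ ^ ((i : ℕ) + 1)) := by
  refine ⟨isOpen_iff_forall_mem_open.mpr fun t ht => ⟨_, subset_rfl, ?_, ht⟩, fun t ht => ?_⟩
  · obtain rfl : _ = B := ht
    exact isOpen_setOf_rowSpan_eq t.2 hB
  · subst ht
    rw [measure_setOf_rowSpan_eq μ hμ t.2 hB, ofReal_mul_prod_norm_pow_eq
      (diag_ne_zero_of_isOpen_rowSpan (mem_triMatrices_iff.mp t.2) hB)]
end
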